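/- arXiv:1204.6159 — 8 statements merged into one kernel-verified Lean document; each statement's English description precedes it below -/
import Mathlib

section
/- Let 0 < β < α < 1. Then for all x, y ∈ (0,∞) one has x^{-α} y^{1-α} + x^{-β} y^{1-β} + y ≤ c(α,β) · (x^{-α} y^{1-α} + y), where c(α,β) = 1 + (β/α)^{β/α} · (1 - β/α)^{1 - β/α}. -/
open Real

/-!
Put `a = x^{-α} y^{1-α}` and `θ = β/α`. Then `x^{-β} y^{1-β} = a^θ y^{1-θ}`, and weighted AM–GM
applied to `a/θ` and `y/(1-θ)` with weights `θ, 1-θ` bounds this by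
`θ^θ (1-θ)^{1-θ} (a + y)`.
-/

/-- The sharp constant is `max_{a+b=1} a^θ b^{1-θ}`, attained at `a = θ`. -/
theorem rpow_mul_rpow_one_sub_le_mul_add {θ a b : ℝ} (hθ₀ : 0 < θ) (hθ₁ : θ < 1)
    (ha : 0 ≤ a) (hb : 0 ≤ b) :
    a ^ θ * b ^ (1 - θ) ≤ θ ^ θ * (1 - θ) ^ (1 - θ) * (a + b) := by
  have hθ' : 0 < 1 - θ := sub_pos.mpr hθ₁
  have amgm := geom_mean_le_arith_mean2_weighted hθ₀.le hθ'.le (div_nonneg ha hθ₀.le)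
    (div_nonneg hb hθ'.le) (add_sub_cancel θ 1)
  calc a ^ θ * b ^ (1 - θ)
      = θ ^ θ * (1 - θ) ^ (1 - θ) * ((a / θ) ^ θ * (b / (1 - θ)) ^ (1 - θ)) := by
        rw [div_rpow ha hθ₀.le, div_rpow hb hθ'.le]
        field_simp [(rpow_pos_of_pos hθ₀ θ).ne', (rpow_pos_of_pos hθ' (1 - θ)).ne']
    _ ≤ θ ^ θ * (1 - θ) ^ (1 - θ) * (θ * (a / θ) + (1 - θ) * (b / (1 - θ))) := by
        gcongr
    _ = θ ^ θ * (1 - θ) ^ (1 - θ) * (a + b) := by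
        field_simp

theorem rpow_neg_mul_rpow_one_sub_rpow_mul_rpow_one_sub {x y : ℝ} (hx : 0 < x) (hy : 0 < y) (α θ : ℝ) :
    (x ^ (-α) * y ^ (1 - α)) ^ θ * y ^ (1 - θ) = x ^ (-(θ * α)) * y ^ (1 - θ * α) := by
  rw [mul_rpow (rpow_nonneg hx.le _) (rpow_nonneg hy.le _), ← rpow_mul hx.le,
    ← rpow_mul hy.le, mul_assoc, ← rpow_add hy]
  ring_nf

theorem stmt_0_general (α β : ℝ) (hβ : 0 < β) (hβα : β < α) :
    ∀ x y : ℝ, 0 < x → 0 < y →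
      x ^ (-α) * y ^ (1 - α) + x ^ (-β) * y ^ (1 - β) + y ≤
        (1 + (β / α) ^ (β / α) * (1 - β / α) ^ (1 - β / α)) *
          (x ^ (-α) * y ^ (1 - α) + y) := by
  intro x y hx hy
  have hα : 0 < α := hβ.trans hβα
  have hβ_eq : β / α * α = β := div_mul_cancel₀ β hα.ne'
  have key := rpow_mul_rpow_one_sub_le_mul_add (div_pos hβ hα) ((div_lt_one hα).mpr hβα)
    (mul_nonneg (rpow_nonneg hx.le (-α)) (rpow_nonneg hy.le (1 - α))) hy.le
  rw [rpow_neg_mul_rpow_one_sub_rpow_mul_rpow_one_sub hx hy, hβ_eq] at key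
  linarith

/-- Numerical inequality (Lemma 5.3): for `0 < β < α < 1` and all
`x, y ∈ (0,∞)`,
`x^{-α} y^{1-α} + x^{-β} y^{1-β} + y ≤ c(α,β) (x^{-α} y^{1-α} + y)` with
`c(α,β) = 1 + (β/α)^{β/α} (1 - β/α)^{1-β/α}`. -/
theorem stmt_0 (α β : ℝ) (hβ : 0 < β) (hβα : β < α) (hα : α < 1) :
    ∀ x y : ℝ, 0 < x → 0 < y →
      x ^ (-α) * y ^ (1 - α) + x ^ (-β) * y ^ (1 - β) + y ≤
        (1 + (β / α) ^ (β / α) * (1 - β / α) ^ (1 - β / α)) *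
          (x ^ (-α) * y ^ (1 - α) + y) :=
  stmt_0_general α β hβ hβα
end

section
/- Let Ω ⊆ ℝ^N be open, let ν and μ be Borel measures on Ω given by densities ρ_ν, ρ_μ : Ω → (0,∞) with respect to Lebesgue measure, and assume 0 < ν(Ω) < ∞. Let M_P > 0 and assume the zero-mean Poincaré inequality on the locally Lipschitz class: for every locally Lipschitz v : Ω → ℝ with ∫_Ω v² dν < ∞ and ∫_Ω ‖∇v‖² dμ < ∞ one has ‖v - v̄‖_{2;ν} ≤ M_P ‖∇v‖_{2;μ} (where ∇v is the almost-everywhere defined gradient). Let r ≥ 1/2 and let Φ : ℝ → ℝ be continuous and strictly increasing with Φ(x)/x^r → l₀ as x → 0, Φ(x)/x^r → l₋ as x → -∞, and Φ(x)/x^r → l₊ as x → +∞, for some constants l₀, l₋, l₊ ∈ (0,∞). Then there exists a constant C_Φ > 0 such that for every ξ ∈ L¹(Ω;ν) with ∫_Ω ξ dν = 0 and such that Φ∘ξ is locally Lipschitz with ∫_Ω (Φ∘ξ)² dν < ∞ and ∫_Ω ‖∇(Φ∘ξ)‖² dμ < ∞, one has ‖Φ∘ξ‖_{2;ν} ≤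 C_Φ ‖∇(Φ∘ξ)‖_{2;μ}. -/
open MeasureTheory Real Filter Topology

/-- Signed power: `x^q = |x|^q · sign x`. -/
noncomputable def spow (x q : ℝ) : ℝ := Real.sign x * |x| ^ q

/-- Weighted `L^p` norm `‖f‖_{p;ν} = (∫ |f|^p dν)^{1/p}`. -/
noncomputable def wnorm {Ω : Type*} [MeasurableSpace Ω] (ν : Measure Ω) (p : ℝ)
    (f : Ω → ℝ) : ℝ := (∫ x, |f x| ^ p ∂ν) ^ (1 / p)

/-- Weighted mean value `f̄ = (∫ f dν)/ν(Ω)`. -/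
noncomputable def wmean {Ω : Type*} [MeasurableSpace Ω] (ν : Measure Ω)
    (f : Ω → ℝ) : ℝ := (∫ x, f x ∂ν) / (ν Set.univ).toReal

/-!
With `q = 1/r`, continuity of `Φ` and the three limits of `Φ x / x^r` give constants with
`A |t| ≤ |Φ t|^q ≤ B |t|`. For `v = Φ ∘ ξ` the zero mean of `ξ` therefore balances the parts
of `v`: `∫ (v⁺)^q ≤ (B/A) ∫ (v⁻)^q` and vice versa. A balanced `v` is far in `L²(ν)` from
every constant `c ≠ 0`: where `|v - c| < |c|/2` it has the sign of `c` and
`|v|^q ≥ (|c|/2)^q`, and where it has the opposite sign `|v| ≤ |v - c|` with `|c| ≤ |v - c|`,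
so that `|v|^q ≤ |c|^(q-2) (v - c)²` because `q ≤ 2`. Hence
`c² ν(Ω) ≤ (4 + 2^q B/A) ‖v - c‖²`, and with `c = v̄` the identity
`‖v‖² = ‖v - v̄‖² + v̄² ν(Ω)` reduces the claim to the zero-mean Poincaré inequality.
-/

lemma spow_of_pos {x : ℝ} (hx : 0 < x) (r : ℝ) : spow x r = x ^ r := by
  rw [spow, Real.sign_of_pos hx, one_mul, abs_of_pos hx]

lemma spow_of_neg {x : ℝ} (hx : x < 0) (r : ℝ) : spow x r = -(-x) ^ r := by
  rw [spow, Real.sign_of_neg hx, neg_one_mul, abs_of_neg hx]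

lemma abs_spow {x : ℝ} (hx : x ≠ 0) (r : ℝ) : |spow x r| = |x| ^ r := by
  rcases hx.lt_or_gt with hx | hx
  · rw [spow_of_neg hx, abs_neg, abs_of_neg hx,
      abs_of_nonneg (rpow_nonneg (neg_nonneg.2 hx.le) r)]
  · rw [spow_of_pos hx, abs_of_pos hx, abs_of_nonneg (by positivity)]

lemma spow_ne_zero {x : ℝ} (hx : x ≠ 0) (r : ℝ) : spow x r ≠ 0 :=
  abs_pos.1 (abs_spow hx r ▸ rpow_pos_of_pos (abs_pos.2 hx) r)

lemma tendsto_spow_nhdsNE_zero {r : ℝ} (hr : 0 < r) :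
    Tendsto (fun x => spow x r) (𝓝[≠] 0) (𝓝 0) := by
  have h : Tendsto (fun x : ℝ => |x| ^ r) (𝓝[≠] 0) (𝓝 0) := by
    simpa [Real.zero_rpow hr.ne'] using
      ((continuous_abs.rpow_const fun _ => Or.inr hr.le).tendsto 0).mono_left nhdsWithin_le_nhds
  refine squeeze_zero_norm' ?_ h
  filter_upwards [self_mem_nhdsWithin] with x hx
  rw [Real.norm_eq_abs, abs_spow hx]

lemma eq_zero_of_tendsto_div_spow {Φ : ℝ → ℝ} {r l : ℝ} (hr : 0 < r)
    (hΦ : ContinuousAt Φ 0) (h : Tendsto (fun x => Φ x / spow x r) (𝓝[≠] 0) (𝓝 l)) : Φ 0 = 0 := by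
  have hprod : Tendsto Φ (𝓝[≠] 0) (𝓝 (l * 0)) := by
    refine (h.mul (tendsto_spow_nhdsNE_zero hr)).congr' ?_
    filter_upwards [self_mem_nhdsWithin] with x hx
    exact div_mul_cancel₀ _ (spow_ne_zero hx r)
  rw [mul_zero] at hprod
  exact tendsto_nhds_unique (hΦ.tendsto.mono_left nhdsWithin_le_nhds) hprod

lemma exists_bounds_of_tendsto_atBot_atTop {g : ℝ → ℝ} {l₁ l₂ : ℝ} (hg : Continuous g)
    (hpos : ∀ s, 0 < g s) (hl₁ : l₁ ≠ 0) (hl₂ : l₂ ≠ 0)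
    (hbot : Tendsto g atBot (𝓝 l₁)) (htop : Tendsto g atTop (𝓝 l₂)) :
    ∃ a b, 0 < a ∧ ∀ s, a ≤ g s ∧ g s ≤ b := by
  have bdd : ∀ {h : ℝ → ℝ} {l₁ l₂ : ℝ}, Continuous h → Tendsto h atBot (𝓝 l₁) →
      Tendsto h atTop (𝓝 l₂) → BddAbove (Set.range h) := fun hh hbot htop =>
    (hh.isBounded_range_iff_isBigO_atTop_atBot.2
      ⟨htop.isBigO_one ℝ, hbot.isBigO_one ℝ⟩).bddAbove
  obtain ⟨b, hb⟩ := bdd hg hbot htop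
  obtain ⟨b', hb'⟩ := bdd (hg.inv₀ fun s => (hpos s).ne') (hbot.inv₀ hl₁) (htop.inv₀ hl₂)
  have hb'pos : 0 < b' := (inv_pos.2 (hpos 0)).trans_le (hb' ⟨0, rfl⟩)
  refine ⟨b'⁻¹, b, inv_pos.2 hb'pos, fun s => ⟨?_, hb ⟨s, rfl⟩⟩⟩
  exact inv_le_of_inv_le₀ (hpos s) (hb' ⟨s, rfl⟩)

lemma exists_bounds_abs_div_spow {Φ : ℝ → ℝ} {r l₀ lbot ltop : ℝ} (hΦc : Continuous Φ)
    (hΦne : ∀ t ≠ 0, Φ t ≠ 0) (hl₀ : l₀ ≠ 0) (hlbot : lbot ≠ 0) (hltop : ltop ≠ 0)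
    (h₀ : Tendsto (fun x => Φ x / spow x r) (𝓝[≠] 0) (𝓝 l₀))
    (hbot : Tendsto (fun x => Φ x / spow x r) atBot (𝓝 lbot))
    (htop : Tendsto (fun x => Φ x / spow x r) atTop (𝓝 ltop)) :
    ∃ a b, 0 < a ∧ ∀ t ≠ 0, a ≤ |Φ t / spow t r| ∧ |Φ t / spow t r| ≤ b := by
  have hpos : ∀ t ≠ 0, 0 < |Φ t / spow t r| := fun t ht =>
    abs_pos.2 (div_ne_zero (hΦne t ht) (spow_ne_zero ht r))
  have hexp : Tendsto exp atBot (𝓝[≠] 0) := tendsto_nhdsWithin_iff.2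
    ⟨tendsto_exp_atBot, .of_forall fun s => (exp_pos s).ne'⟩
  have hnexp : Tendsto (fun s => -exp s) atBot (𝓝[≠] 0) := tendsto_nhdsWithin_iff.2
    ⟨by simpa using tendsto_exp_atBot.neg, .of_forall fun s => neg_ne_zero.2 (exp_pos s).ne'⟩
  have hcont₁ : Continuous fun s => |Φ (exp s) / spow (exp s) r| := by
    simp only [spow_of_pos (exp_pos _), ← exp_mul]
    fun_prop (disch := exact fun s => (exp_pos _).ne')
  have hcont₂ : Continuous fun s => |Φ (-exp s) / spow (-exp s) r| := by
    simp only [spow_of_neg (neg_neg_of_pos (exp_pos _)), neg_neg, ← exp_mul]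
    fun_prop (disch := exact fun s => neg_ne_zero.2 (exp_pos _).ne')
  obtain ⟨a₁, b₁, ha₁, hab₁⟩ := exists_bounds_of_tendsto_atBot_atTop hcont₁
    (fun s => hpos _ (exp_pos s).ne') (abs_ne_zero.2 hl₀) (abs_ne_zero.2 hltop)
    (h₀.abs.comp hexp) (htop.abs.comp tendsto_exp_atTop)
  obtain ⟨a₂, b₂, ha₂, hab₂⟩ := exists_bounds_of_tendsto_atBot_atTop hcont₂
    (fun s => hpos _ (neg_ne_zero.2 (exp_pos s).ne')) (abs_ne_zero.2 hl₀)
    (abs_ne_zero.2 hlbot)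
    (h₀.abs.comp hnexp) (hbot.abs.comp (tendsto_neg_atTop_atBot.comp tendsto_exp_atTop))
  refine ⟨min a₁ a₂, max b₁ b₂, lt_min ha₁ ha₂, fun t ht => ?_⟩
  rcases ht.lt_or_gt with ht | ht
  · obtain ⟨h₁, h₂⟩ := hab₂ (log (-t))
    rw [exp_log (neg_pos.2 ht), neg_neg] at h₁ h₂
    exact ⟨min_le_of_right_le h₁, le_max_of_le_right h₂⟩
  · obtain ⟨h₁, h₂⟩ := hab₁ (log t)
    rw [exp_log ht] at h₁ h₂
    exact ⟨min_le_of_left_le h₁, le_max_of_le_left h₂⟩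

lemma exists_abs_rpow_inv_bounds {Φ : ℝ → ℝ} {r l₀ lbot ltop : ℝ} (hr : 0 < r)
    (hΦc : Continuous Φ) (hΦinj : Function.Injective Φ) (hΦ0 : Φ 0 = 0)
    (hl₀ : l₀ ≠ 0) (hlbot : lbot ≠ 0) (hltop : ltop ≠ 0)
    (h₀ : Tendsto (fun x => Φ x / spow x r) (𝓝[≠] 0) (𝓝 l₀))
    (hbot : Tendsto (fun x => Φ x / spow x r) atBot (𝓝 lbot))
    (htop : Tendsto (fun x => Φ x / spow x r) atTop (𝓝 ltop)) :
    ∃ A B, 0 < A ∧ 0 < B ∧ ∀ t, A * |t| ≤ |Φ t| ^ r⁻¹ ∧ |Φ t| ^ r⁻¹ ≤ B * |t| := by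
  have hΦne : ∀ t ≠ 0, Φ t ≠ 0 := fun t ht h => ht (hΦinj (h.trans hΦ0.symm))
  obtain ⟨a, b, ha, hab⟩ :=
    exists_bounds_abs_div_spow hΦc hΦne hl₀ hlbot hltop h₀ hbot htop
  have hb : 0 < b := ha.trans_le ((hab 1 one_ne_zero).1.trans (hab 1 one_ne_zero).2)
  refine ⟨a ^ r⁻¹, b ^ r⁻¹, rpow_pos_of_pos ha _, rpow_pos_of_pos hb _, fun t => ?_⟩
  rcases eq_or_ne t 0 with rfl | ht
  · simp [hΦ0, zero_rpow (inv_ne_zero hr.ne')]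
  have hfac : |Φ t| ^ r⁻¹ = |Φ t / spow t r| ^ r⁻¹ * |t| := by
    rw [← rpow_rpow_inv (abs_nonneg t) hr.ne', ← mul_rpow (abs_nonneg _) (by positivity),
      ← abs_spow ht, ← abs_mul, div_mul_cancel₀ _ (spow_ne_zero ht r)]
  obtain ⟨hlo, hhi⟩ := hab t ht
  rw [hfac]
  constructor <;> gcongr

lemma sq_sub_four_mul_sq_le_rpow_posPart {c q : ℝ} (y : ℝ) (hc : 0 < c) (hq : 0 ≤ q) :
    c ^ 2 - 4 * (y - c) ^ 2 ≤ 2 ^ q * (c ^ (2 - q) * y⁺ ^ q) := by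
  by_cases hfar : c ^ 2 ≤ 4 * (y - c) ^ 2
  · have : 0 ≤ 2 ^ q * (c ^ (2 - q) * y⁺ ^ q) := by positivity
    linarith
  have hy : c / 2 ≤ y := by nlinarith
  have hc2 : c ^ 2 = 2 ^ q * (c ^ (2 - q) * (c / 2) ^ q) := by
    rw [div_rpow hc.le zero_le_two, mul_div_assoc', mul_div_cancel₀ _ (by positivity),
      ← rpow_add hc, sub_add_cancel, rpow_two]
  calc c ^ 2 - 4 * (y - c) ^ 2 ≤ c ^ 2 := by nlinarith
    _ = 2 ^ q * (c ^ (2 - q) * (c / 2) ^ q) := hc2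
    _ ≤ 2 ^ q * (c ^ (2 - q) * y⁺ ^ q) := by
      gcongr
      exact hy.trans (le_posPart y)

lemma rpow_mul_rpow_negPart_le_sq {c q : ℝ} (y : ℝ) (hc : 0 < c) (hq0 : 0 < q)
    (hq2 : q ≤ 2) :
    c ^ (2 - q) * y⁻ ^ q ≤ (y - c) ^ 2 := by
  rcases le_or_gt 0 y with hy | hy
  · rw [negPart_eq_zero.2 hy, zero_rpow hq0.ne', mul_zero]
    positivity
  calc c ^ (2 - q) * y⁻ ^ q ≤ (c - y) ^ (2 - q) * (c - y) ^ q := by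
        rw [negPart_eq_neg.2 hy.le]
        gcongr
        all_goals first | linarith | exact rpow_nonneg (by linarith) _
    _ = (y - c) ^ 2 := by
      rw [← rpow_add (by linarith), sub_add_cancel, rpow_two]
      ring

lemma Monotone.posPart_map {Φ : ℝ → ℝ} (hΦ : Monotone Φ) (hΦ0 : Φ 0 = 0) (s : ℝ) :
    (Φ s)⁺ = |Φ s⁺| := by
  have h : Φ s⁺ = (Φ s)⁺ := by rw [posPart_def, posPart_def, hΦ.map_sup, hΦ0]
  rw [h, abs_of_nonneg (posPart_nonneg _)]

lemma Monotone.negPart_map {Φ : ℝ → ℝ} (hΦ : Monotone Φ) (hΦ0 : Φ 0 = 0) (s : ℝ) :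
    (Φ s)⁻ = |Φ (-s⁻)| := by
  have h : Φ (-s⁻) = -(Φ s)⁻ := by
    rw [negPart_eq_neg_inf_zero, negPart_eq_neg_inf_zero, neg_neg, neg_neg, hΦ.map_inf, hΦ0]
  rw [h, abs_neg, abs_of_nonneg (negPart_nonneg _)]

section

variable {α : Type*} [MeasurableSpace α] {ν : Measure α}

lemma wnorm_two (f : α → ℝ) : wnorm ν 2 f = √(∫ x, f x ^ 2 ∂ν) := by
  simp only [wnorm, rpow_two, sq_abs, sqrt_eq_rpow]

lemma wmean_mul_measureReal_univ [IsFiniteMeasure ν] (f : α → ℝ) :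
    wmean ν f * ν.real Set.univ = ∫ x, f x ∂ν := by
  rcases eq_zero_or_neZero ν with rfl | _
  · simp
  · exact div_mul_cancel₀ _ measureReal_univ_ne_zero

lemma integral_le_div_mul_integral_of_integral_eq_zero {ξ f g : α → ℝ} {a b : ℝ}
    (ha : 0 < a) (hb : 0 ≤ b) (hξ : Integrable ξ ν) (hξ0 : ∫ x, ξ x ∂ν = 0)
    (hg : Integrable g ν) (hf0 : ∀ x, 0 ≤ f x) (hf : ∀ x, f x ≤ b * (ξ x)⁺)
    (hg' : ∀ x, a * (ξ x)⁻ ≤ g x) : ∫ x, f x ∂ν ≤ b / a * ∫ x, g x ∂ν := by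
  have hpos : Integrable (fun x => (ξ x)⁺) ν := hξ.pos_part
  have hneg : Integrable (fun x => (ξ x)⁻) ν := hξ.neg.pos_part
  have hbalance : ∫ x, (ξ x)⁺ ∂ν = ∫ x, (ξ x)⁻ ∂ν := by
    rw [← sub_eq_zero, ← integral_sub hpos hneg]
    simpa only [posPart_sub_negPart] using hξ0
  calc ∫ x, f x ∂ν ≤ ∫ x, b * (ξ x)⁺ ∂ν :=
        integral_mono_of_nonneg (.of_forall hf0) (hpos.const_mul b) (.of_forall hf)
    _ = b / a * ∫ x, a * (ξ x)⁻ ∂ν := by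
        rw [integral_const_mul, integral_const_mul, hbalance]
        field_simp
    _ ≤ b / a * ∫ x, g x ∂ν := mul_le_mul_of_nonneg_left
        (integral_mono_of_nonneg (.of_forall fun x => by positivity) hg (.of_forall hg'))
        (by positivity)

variable [IsFiniteMeasure ν] {v : α → ℝ} {q Λ c : ℝ}

lemma MemLp.integrable_rpow_of_nonneg (hv : MemLp v 2 ν) (hv0 : ∀ x, 0 ≤ v x)
    (hq0 : 0 < q) (hq2 : q ≤ 2) : Integrable (fun x => v x ^ q) ν := by
  have hqp : ENNReal.ofReal q ≤ 2 := by simpa using ENNReal.ofReal_le_ofReal hq2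
  simpa [abs_of_nonneg (hv0 _), hq0.le] using
    (hv.mono_exponent hqp).integrable_norm_rpow (by simpa using hq0) ENNReal.ofReal_ne_top

lemma integral_sq_eq_integral_sub_sq_add (hv : MemLp v 2 ν)
    (hmean : ∫ x, v x ∂ν = c * ν.real Set.univ) :
    ∫ x, v x ^ 2 ∂ν = ∫ x, (v x - c) ^ 2 ∂ν + c ^ 2 * ν.real Set.univ := by
  have hsq : Integrable (fun x => (v x - c) ^ 2) ν := (hv.sub (memLp_const c)).integrable_sq
  have hv1 : Integrable (fun x => 2 * c * v x) ν := (hv.integrable one_le_two).const_mul _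
  have hlin : Integrable (fun x => 2 * c * v x - c ^ 2) ν := hv1.sub (integrable_const _)
  calc ∫ x, v x ^ 2 ∂ν = ∫ x, ((v x - c) ^ 2 + (2 * c * v x - c ^ 2)) ∂ν := by
        congr 1 with x; ring
    _ = ∫ x, (v x - c) ^ 2 ∂ν + (2 * c * ∫ x, v x ∂ν - c ^ 2 * ν.real Set.univ) := by
        rw [integral_add hsq hlin, integral_sub hv1 (integrable_const _), integral_const_mul,
          integral_const, smul_eq_mul, mul_comm (ν.real _)]
    _ = _ := by rw [hmean]; ring

lemma sq_mul_measureReal_univ_le_of_integral_posPart_rpow_le (hq0 : 0 < q) (hq2 : q ≤ 2)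
    (hΛ : 0 ≤ Λ) (hv : MemLp v 2 ν) (hc : 0 < c)
    (hparts : ∫ x, (v x)⁺ ^ q ∂ν ≤ Λ * ∫ x, (v x)⁻ ^ q ∂ν) :
    c ^ 2 * ν.real Set.univ ≤ (4 + 2 ^ q * Λ) * ∫ x, (v x - c) ^ 2 ∂ν := by
  set D := ∫ x, (v x - c) ^ 2 ∂ν
  have hsq : Integrable (fun x => (v x - c) ^ 2) ν := (hv.sub (memLp_const c)).integrable_sq
  have hpos : Integrable (fun x => (v x)⁺ ^ q) ν :=
    MemLp.integrable_rpow_of_nonneg hv.pos_part (fun x => posPart_nonneg (v x)) hq0 hq2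
  have hneg : Integrable (fun x => (v x)⁻ ^ q) ν :=
    MemLp.integrable_rpow_of_nonneg hv.neg.pos_part (fun x => negPart_nonneg (v x)) hq0 hq2
  have hlower :
      c ^ 2 * ν.real Set.univ - 4 * D ≤ 2 ^ q * (c ^ (2 - q) * ∫ x, (v x)⁺ ^ q ∂ν) :=
    calc c ^ 2 * ν.real Set.univ - 4 * D = ∫ x, (c ^ 2 - 4 * (v x - c) ^ 2) ∂ν := by
          rw [integral_sub (integrable_const _) (hsq.const_mul 4), integral_const,
            integral_const_mul, smul_eq_mul, mul_comm]
      _ ≤ ∫ x, 2 ^ q * (c ^ (2 - q) * (v x)⁺ ^ q) ∂ν :=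
          integral_mono ((integrable_const _).sub (hsq.const_mul 4))
            ((hpos.const_mul _).const_mul _)
            fun x => sq_sub_four_mul_sq_le_rpow_posPart (v x) hc hq0.le
      _ = 2 ^ q * (c ^ (2 - q) * ∫ x, (v x)⁺ ^ q ∂ν) := by
          rw [integral_const_mul, integral_const_mul]
  have hupper : c ^ (2 - q) * ∫ x, (v x)⁻ ^ q ∂ν ≤ D := by
    rw [← integral_const_mul]
    exact integral_mono (hneg.const_mul _) hsq
      fun x => rpow_mul_rpow_negPart_le_sq (v x) hc hq0 hq2
  have hcompare : c ^ (2 - q) * ∫ x, (v x)⁺ ^ q ∂ν ≤ Λ * D :=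
    calc c ^ (2 - q) * ∫ x, (v x)⁺ ^ q ∂ν ≤ c ^ (2 - q) * (Λ * ∫ x, (v x)⁻ ^ q ∂ν) := by
          gcongr
      _ = Λ * (c ^ (2 - q) * ∫ x, (v x)⁻ ^ q ∂ν) := by ring
      _ ≤ Λ * D := by gcongr
  have hscaled : 2 ^ q * (c ^ (2 - q) * ∫ x, (v x)⁺ ^ q ∂ν) ≤ 2 ^ q * (Λ * D) := by gcongr
  linarith

lemma sq_mul_measureReal_univ_le_of_integral_rpow_parts_le (hq0 : 0 < q) (hq2 : q ≤ 2)
    (hΛ : 0 ≤ Λ) (hv : MemLp v 2 ν)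
    (hpos : ∫ x, (v x)⁺ ^ q ∂ν ≤ Λ * ∫ x, (v x)⁻ ^ q ∂ν)
    (hneg : ∫ x, (v x)⁻ ^ q ∂ν ≤ Λ * ∫ x, (v x)⁺ ^ q ∂ν) :
    c ^ 2 * ν.real Set.univ ≤ (4 + 2 ^ q * Λ) * ∫ x, (v x - c) ^ 2 ∂ν := by
  rcases lt_trichotomy c 0 with hc | rfl | hc
  · have h := sq_mul_measureReal_univ_le_of_integral_posPart_rpow_le (v := fun x => -v x)
      hq0 hq2 hΛ hv.neg (neg_pos.2 hc) (by simpa only [posPart_neg, negPart_neg] using hneg)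
    simpa only [neg_sq, neg_sub_neg, ← neg_sub (v _), neg_sq] using h
  · rw [zero_pow two_ne_zero, zero_mul]
    exact mul_nonneg (by positivity) (integral_nonneg fun x => sq_nonneg _)
  · exact sq_mul_measureReal_univ_le_of_integral_posPart_rpow_le hq0 hq2 hΛ hv hc hpos

lemma integral_sq_comp_le_mul_integral_sub_wmean_sq {Φ : ℝ → ℝ} {ξ : α → ℝ} {q A B : ℝ}
    (hΦ : Monotone Φ) (hΦ0 : Φ 0 = 0) (hq0 : 0 < q) (hq2 : q ≤ 2) (hA : 0 < A) (hB : 0 ≤ B)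
    (hAB : ∀ t, A * |t| ≤ |Φ t| ^ q ∧ |Φ t| ^ q ≤ B * |t|)
    (hξ : Integrable ξ ν) (hξ0 : ∫ x, ξ x ∂ν = 0) (hv : MemLp (fun x => Φ (ξ x)) 2 ν) :
    ∫ x, Φ (ξ x) ^ 2 ∂ν ≤
      (5 + 2 ^ q * (B / A)) * ∫ x, (Φ (ξ x) - wmean ν (fun x => Φ (ξ x))) ^ 2 ∂ν := by
  have hpos : ∀ s, A * s⁺ ≤ (Φ s)⁺ ^ q ∧ (Φ s)⁺ ^ q ≤ B * s⁺ := fun s => by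
    simpa only [abs_of_nonneg (posPart_nonneg s), ← hΦ.posPart_map hΦ0] using hAB s⁺
  have hneg : ∀ s, A * s⁻ ≤ (Φ s)⁻ ^ q ∧ (Φ s)⁻ ^ q ≤ B * s⁻ := fun s => by
    simpa only [abs_neg, abs_of_nonneg (negPart_nonneg s), ← hΦ.negPart_map hΦ0]
      using hAB (-s⁻)
  have hintPos : Integrable (fun x => (Φ (ξ x))⁺ ^ q) ν :=
    MemLp.integrable_rpow_of_nonneg hv.pos_part (fun x => posPart_nonneg _) hq0 hq2
  have hintNeg : Integrable (fun x => (Φ (ξ x))⁻ ^ q) ν :=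
    MemLp.integrable_rpow_of_nonneg hv.neg.pos_part (fun x => negPart_nonneg _) hq0 hq2
  have hcompPos := integral_le_div_mul_integral_of_integral_eq_zero hA hB hξ hξ0 hintNeg
    (fun x => by positivity) (fun x => (hpos (ξ x)).2) (fun x => (hneg (ξ x)).1)
  have hcompNeg := integral_le_div_mul_integral_of_integral_eq_zero (ξ := fun x => -ξ x)
    (f := fun x => (Φ (ξ x))⁻ ^ q) hA hB hξ.neg (by rw [integral_neg, hξ0, neg_zero]) hintPos
    (fun x => by positivity)
    (fun x => by simpa only [posPart_neg] using (hneg (ξ x)).2)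
    (fun x => by simpa only [negPart_neg] using (hpos (ξ x)).1)
  have hdist := sq_mul_measureReal_univ_le_of_integral_rpow_parts_le
    (c := wmean ν fun x => Φ (ξ x)) hq0 hq2 (by positivity) hv hcompPos hcompNeg
  have hD : 0 ≤ ∫ x, (Φ (ξ x) - wmean ν (fun x => Φ (ξ x))) ^ 2 ∂ν :=
    integral_nonneg fun x => sq_nonneg _
  rw [integral_sq_eq_integral_sub_sq_add hv (wmean_mul_measureReal_univ _).symm]
  linarith

end

theorem stmt_1_general (N : ℕ) (Ω : Set (EuclideanSpace ℝ (Fin N)))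
    (ν μ : Measure (EuclideanSpace ℝ (Fin N)))
    (hνfin : ν Set.univ < ⊤)
    (MP : ℝ) (hMP : 0 < MP)
    (hpoincare : ∀ v : EuclideanSpace ℝ (Fin N) → ℝ, LocallyLipschitzOn Ω v →
      Integrable (fun x => (v x) ^ 2) ν →
      Integrable (fun x => ‖gradient v x‖ ^ 2) μ →
      wnorm ν 2 (fun x => v x - wmean ν v) ≤
        MP * (∫ x, ‖gradient v x‖ ^ 2 ∂μ) ^ ((1 : ℝ) / 2))
    (r : ℝ) (hr : (1 : ℝ) / 2 ≤ r) (Φ : ℝ → ℝ) (hΦc : Continuous Φ)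
    (hΦmono : StrictMono Φ) (l₀ lminus lplus : ℝ)
    (hl₀ : 0 < l₀) (hlminus : 0 < lminus) (hlplus : 0 < lplus)
    (hΦ0 : Tendsto (fun x => Φ x / spow x r) (nhdsWithin 0 {(0 : ℝ)}ᶜ) (nhds l₀))
    (hΦbot : Tendsto (fun x => Φ x / spow x r) atBot (nhds lminus))
    (hΦtop : Tendsto (fun x => Φ x / spow x r) atTop (nhds lplus)) :
    ∃ CΦ : ℝ, 0 < CΦ ∧
      ∀ ξ : EuclideanSpace ℝ (Fin N) → ℝ, Integrable ξ ν →
        (∫ x, ξ x ∂ν) = 0 →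
        LocallyLipschitzOn Ω (fun x => Φ (ξ x)) →
        Integrable (fun x => (Φ (ξ x)) ^ 2) ν →
        Integrable (fun x => ‖gradient (fun y => Φ (ξ y)) x‖ ^ 2) μ →
        wnorm ν 2 (fun x => Φ (ξ x)) ≤
          CΦ * (∫ x, ‖gradient (fun y => Φ (ξ y)) x‖ ^ 2 ∂μ) ^ ((1 : ℝ) / 2) := by
  have : IsFiniteMeasure ν := ⟨hνfin⟩
  have hr0 : 0 < r := by linarith
  have hq2 : r⁻¹ ≤ 2 := by rw [inv_le_comm₀ hr0 two_pos]; linarith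
  have hΦzero : Φ 0 = 0 := eq_zero_of_tendsto_div_spow hr0 hΦc.continuousAt hΦ0
  obtain ⟨A, B, hA, hB, hAB⟩ := exists_abs_rpow_inv_bounds hr0 hΦc hΦmono.injective hΦzero
    hl₀.ne' hlminus.ne' hlplus.ne' hΦ0 hΦbot hΦtop
  set K : ℝ := 5 + 2 ^ r⁻¹ * (B / A)
  refine ⟨√K * MP, by positivity, fun ξ hξ hξ0 hlip hv2 hgrad => ?_⟩
  have hv : MemLp (fun x => Φ (ξ x)) 2 ν :=
    (memLp_two_iff_integrable_sq (hΦc.comp_aestronglyMeasurable hξ.1)).2 hv2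
  have hcenter := integral_sq_comp_le_mul_integral_sub_wmean_sq hΦmono.monotone hΦzero
    (inv_pos.2 hr0) hq2 hA hB.le hAB hξ hξ0 hv
  have hpoinc := hpoincare _ hlip hv2 hgrad
  rw [wnorm_two] at hpoinc ⊢
  calc _ ≤ √(K * _) := sqrt_le_sqrt hcenter
    _ = √K * _ := sqrt_mul (by positivity) _
    _ ≤ √K * (MP * _) := by gcongr
    _ = _ := (mul_assoc _ _ _).symm

/-- Generalized Poincaré inequality (Lemma 5.5): from the zero-mean
Poincaré inequality and the two-sided power-like behaviour of a continuous strictly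
increasing `Φ`, one gets `‖Φ∘ξ‖_{2;ν} ≤ C_Φ ‖∇(Φ∘ξ)‖_{2;μ}` for all zero-mean
`ξ ∈ L¹(Ω;ν)`. -/
theorem stmt_1 (N : ℕ) (Ω : Set (EuclideanSpace ℝ (Fin N))) (hΩ : IsOpen Ω)
    (ρν ρμ : EuclideanSpace ℝ (Fin N) → ℝ)
    (hρν : ∀ x ∈ Ω, 0 < ρν x) (hρμ : ∀ x ∈ Ω, 0 < ρμ x)
    (hρνm : Measurable ρν) (hρμm : Measurable ρμ)
    (ν μ : Measure (EuclideanSpace ℝ (Fin N)))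
    (hν : ν = (volume.restrict Ω).withDensity (fun x => ENNReal.ofReal (ρν x)))
    (hμ : μ = (volume.restrict Ω).withDensity (fun x => ENNReal.ofReal (ρμ x)))
    (hν0 : 0 < ν Set.univ) (hνfin : ν Set.univ < ⊤)
    (MP : ℝ) (hMP : 0 < MP)
    (hpoincare : ∀ v : EuclideanSpace ℝ (Fin N) → ℝ, LocallyLipschitzOn Ω v →
      Integrable (fun x => (v x) ^ 2) ν →
      Integrable (fun x => ‖gradient v x‖ ^ 2) μ →
      wnorm ν 2 (fun x => v x - wmean ν v) ≤
        MP * (∫ x, ‖gradient v x‖ ^ 2 ∂μ) ^ ((1 : ℝ) / 2))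
    (r : ℝ) (hr : (1 : ℝ) / 2 ≤ r) (Φ : ℝ → ℝ) (hΦc : Continuous Φ)
    (hΦmono : StrictMono Φ) (l₀ lminus lplus : ℝ)
    (hl₀ : 0 < l₀) (hlminus : 0 < lminus) (hlplus : 0 < lplus)
    (hΦ0 : Tendsto (fun x => Φ x / spow x r) (nhdsWithin 0 {(0 : ℝ)}ᶜ) (nhds l₀))
    (hΦbot : Tendsto (fun x => Φ x / spow x r) atBot (nhds lminus))
    (hΦtop : Tendsto (fun x => Φ x / spow x r) atTop (nhds lplus)) :
    ∃ CΦ : ℝ, 0 < CΦ ∧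
      ∀ ξ : EuclideanSpace ℝ (Fin N) → ℝ, Integrable ξ ν →
        (∫ x, ξ x ∂ν) = 0 →
        LocallyLipschitzOn Ω (fun x => Φ (ξ x)) →
        Integrable (fun x => (Φ (ξ x)) ^ 2) ν →
        Integrable (fun x => ‖gradient (fun y => Φ (ξ y)) x‖ ^ 2) μ →
        wnorm ν 2 (fun x => Φ (ξ x)) ≤
          CΦ * (∫ x, ‖gradient (fun y => Φ (ξ y)) x‖ ^ 2 ∂μ) ^ ((1 : ℝ) / 2) :=
  stmt_1_general N Ω ν μ hνfin MP hMP hpoincare r hr Φ hΦc hΦmono l₀ lminus lplus hl₀ hlminus hlplus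
    hΦ0 hΦbot hΦtop
end

section
/- Let ν be a finite Borel measure on a set Ω with 0 < ν(Ω) < ∞, let r ∈ [1,2), ε > 0, M_P > 0 and G ≥ 0. Let v be measurable with 0 < ‖v‖_{r;ν} < ∞ and ‖v‖_{2;ν} < ∞, let v̄ := (∫_Ω v dν)/ν(Ω), and suppose ‖v - v̄‖_{2;ν} ≤ M_P · G. Then ( J(r,v) + log(ε)/(2-r) ) · (2-r) · ‖v‖²_{r;ν} / (2 ε M_P²) - v̄² · ν(Ω) / M_P² ≤ G². -/
open MeasureTheory Real

/-- Entropy functional `J(r,f) = ∫ (|f|^r/‖f‖_{r;ν}^r) log(|f|/‖f‖_{r;ν}) dν`. -/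
noncomputable def entropyJ {Ω : Type*} [MeasurableSpace Ω] (ν : Measure Ω) (r : ℝ)
    (f : Ω → ℝ) : ℝ :=
  ∫ x, |f x| ^ r / (wnorm ν r f) ^ r * Real.log (|f x| / wnorm ν r f) ∂ν

/-!
With `u = |v| / ‖v‖_{r;ν}`, so that `∫ u^r dν = 1`, the inequality `log t ≤ t` at
`t = ε u^(2-r)` gives `u^r (log u + log ε / (2-r)) ≤ ε u² / (2-r)` pointwise. Integrating yields
`(J(r,v) + log ε / (2-r)) (2-r) ‖v‖_{r;ν}² ≤ ε ‖v‖_{2;ν}²`, and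
`‖v‖_{2;ν}² = ‖v - v̄‖_{2;ν}² + v̄² ν(Ω) ≤ M_P² G² + v̄² ν(Ω)`.
-/

namespace Real

lemma rpow_mul_log_add_log_div_le {r ε y : ℝ} (hr0 : 0 < r) (hr2 : r < 2) (hε : 0 < ε)
    (hy : 0 ≤ y) : y ^ r * (log y + log ε / (2 - r)) ≤ ε * y ^ 2 / (2 - r) := by
  have h2r : 0 < 2 - r := by linarith
  rcases hy.eq_or_lt with rfl | hy
  · simp [zero_rpow hr0.ne']
  have hsplit : log y + log ε / (2 - r) = log (ε * y ^ (2 - r)) / (2 - r) := by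
    rw [log_mul hε.ne' (rpow_pos_of_pos hy _).ne', log_rpow hy]
    field_simp
    ring
  calc y ^ r * (log y + log ε / (2 - r))
      = y ^ r * log (ε * y ^ (2 - r)) / (2 - r) := by rw [hsplit, mul_div_assoc]
    _ ≤ y ^ r * (ε * y ^ (2 - r)) / (2 - r) := by gcongr; exact log_le_self (by positivity)
    _ = ε * y ^ 2 / (2 - r) := by
      rw [mul_left_comm, ← rpow_add hy, add_sub_cancel, rpow_two]

lemma abs_rpow_mul_log_le {r y : ℝ} (hr0 : 0 < r) (hr2 : r < 2) (hy : 0 ≤ y) :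
    |y ^ r * log y| ≤ 1 / r + y ^ 2 / (2 - r) := by
  have h2r : 0 < 2 - r := by linarith
  rcases le_or_gt y 1 with hy1 | hy1
  · rcases hy.eq_or_lt with rfl | hy
    · simp only [log_zero, mul_zero, abs_zero]
      positivity
    have := abs_log_mul_self_rpow_lt y r hy hy1 hr0
    rw [mul_comm] at this
    linarith [show 0 ≤ y ^ 2 / (2 - r) by positivity]
  · have hlog : 0 ≤ log y := log_nonneg hy1.le
    calc |y ^ r * log y| = y ^ r * log y := abs_of_nonneg (by positivity)
      _ ≤ y ^ r * (y ^ (2 - r) / (2 - r)) := by gcongr; exact log_le_rpow_div hy h2r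
      _ = y ^ 2 / (2 - r) := by
        rw [← mul_div_assoc, ← rpow_add (by linarith), add_sub_cancel, rpow_two]
      _ ≤ 1 / r + y ^ 2 / (2 - r) := le_add_of_nonneg_left (by positivity)

end Real

section WeightedNorms

variable {Ω : Type*} [MeasurableSpace Ω] {ν : Measure Ω}

lemma wnorm_nonneg (p : ℝ) (f : Ω → ℝ) : 0 ≤ wnorm ν p f :=
  rpow_nonneg (integral_nonneg fun _ => rpow_nonneg (abs_nonneg _) _) _

lemma wnorm_rpow_self {p : ℝ} (hp : p ≠ 0) (f : Ω → ℝ) :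
    wnorm ν p f ^ p = ∫ x, |f x| ^ p ∂ν := by
  rw [wnorm, ← rpow_mul (integral_nonneg fun _ => rpow_nonneg (abs_nonneg _) _),
    one_div_mul_cancel hp, rpow_one]

lemma wnorm_two_sq (f : Ω → ℝ) : wnorm ν 2 f ^ 2 = ∫ x, f x ^ 2 ∂ν := by
  simp only [wnorm, rpow_two, sq_abs, ← sqrt_eq_rpow]
  exact sq_sqrt (integral_nonneg fun _ => sq_nonneg _)

lemma integral_sq_sub_wmean [IsFiniteMeasure ν] {v : Ω → ℝ} (hv : MemLp v 2 ν) :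
    ∫ x, (v x - wmean ν v) ^ 2 ∂ν =
      ∫ x, v x ^ 2 ∂ν - wmean ν v ^ 2 * (ν Set.univ).toReal := by
  set m := wmean ν v
  have hv1 : Integrable v ν := hv.integrable one_le_two
  have hv2 : Integrable (fun x => v x ^ 2) ν :=
    (memLp_two_iff_integrable_sq hv.aestronglyMeasurable).1 hv
  have hmean : m * ∫ x, v x ∂ν = m ^ 2 * (ν Set.univ).toReal := by
    rcases eq_or_ne (ν Set.univ).toReal 0 with h | h
    · simp [m, wmean, h]
    · simp only [m, wmean]
      field_simp
  have hlin : Integrable (fun x => v x ^ 2 - 2 * m * v x) ν := hv2.sub (hv1.const_mul _)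
  calc ∫ x, (v x - m) ^ 2 ∂ν = ∫ x, (v x ^ 2 - 2 * m * v x) + m ^ 2 ∂ν := by
        congr 1 with x
        ring
    _ = ∫ x, v x ^ 2 ∂ν - 2 * (m * ∫ x, v x ∂ν) + m ^ 2 * (ν Set.univ).toReal := by
        rw [integral_add hlin (integrable_const _), integral_sub hv2 (hv1.const_mul _),
          integral_const_mul, integral_const, smul_eq_mul, measureReal_def]
        ring
    _ = ∫ x, v x ^ 2 ∂ν - m ^ 2 * (ν Set.univ).toReal := by rw [hmean]; ring

lemma entropyJ_add_log_div_le [IsFiniteMeasure ν] {r ε : ℝ} (hr0 : 0 < r) (hr2 : r < 2)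
    (hε : 0 < ε) {v : Ω → ℝ} (hv : Measurable v) (hN : 0 < wnorm ν r v)
    (hvr : Integrable (fun x => |v x| ^ r) ν) (hv2 : Integrable (fun x => v x ^ 2) ν) :
    (entropyJ ν r v + log ε / (2 - r)) * (2 - r) * wnorm ν r v ^ 2 ≤
      ε * ∫ x, v x ^ 2 ∂ν := by
  set N := wnorm ν r v
  set c := log ε / (2 - r)
  have h2r : 0 < 2 - r := by linarith
  have hu : ∀ x, |v x| ^ r / N ^ r = (|v x| / N) ^ r := fun x =>
    (div_rpow (abs_nonneg _) hN.le r).symm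
  have hu2 : ∀ x, (|v x| / N) ^ 2 = v x ^ 2 / N ^ 2 := fun x => by rw [div_pow, sq_abs]
  have hmass : ∫ x, |v x| ^ r / N ^ r ∂ν = 1 := by
    rw [integral_div, ← wnorm_rpow_self hr0.ne', div_self (rpow_pos_of_pos hN r).ne']
  have hJint : Integrable (fun x => |v x| ^ r / N ^ r * log (|v x| / N)) ν := by
    refine ((integrable_const (1 / r)).add ((hv2.div_const (N ^ 2)).div_const (2 - r))).mono'
      (by fun_prop) (ae_of_all _ fun x => ?_)
    dsimp only [Pi.add_apply]
    rw [norm_eq_abs, hu, ← hu2]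
    exact abs_rpow_mul_log_le hr0 hr2 (by positivity)
  have hpt : ∀ x, |v x| ^ r / N ^ r * log (|v x| / N) + c * (|v x| ^ r / N ^ r) ≤
      ε * v x ^ 2 / (N ^ 2 * (2 - r)) := fun x => by
    have := rpow_mul_log_add_log_div_le hr0 hr2 hε (div_nonneg (abs_nonneg (v x)) hN.le)
    rw [hu2] at this
    calc |v x| ^ r / N ^ r * log (|v x| / N) + c * (|v x| ^ r / N ^ r)
        = (|v x| / N) ^ r * (log (|v x| / N) + c) := by rw [hu]; ring
      _ ≤ ε * (v x ^ 2 / N ^ 2) / (2 - r) := this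
      _ = ε * v x ^ 2 / (N ^ 2 * (2 - r)) := by field_simp
  have hJ : entropyJ ν r v + c ≤ ε * (∫ x, v x ^ 2 ∂ν) / (N ^ 2 * (2 - r)) :=
    calc entropyJ ν r v + c
        = ∫ x, |v x| ^ r / N ^ r * log (|v x| / N) + c * (|v x| ^ r / N ^ r) ∂ν := by
          rw [integral_add hJint ((hvr.div_const _).const_mul c), integral_const_mul, hmass,
            mul_one]
          rfl
      _ ≤ ∫ x, ε * v x ^ 2 / (N ^ 2 * (2 - r)) ∂ν :=
          integral_mono (hJint.add ((hvr.div_const _).const_mul c))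
            ((hv2.const_mul ε).div_const _) hpt
      _ = ε * (∫ x, v x ^ 2 ∂ν) / (N ^ 2 * (2 - r)) := by
          rw [integral_div, integral_const_mul]
  calc (entropyJ ν r v + c) * (2 - r) * N ^ 2 = (entropyJ ν r v + c) * (N ^ 2 * (2 - r)) := by
        ring
    _ ≤ ε * ∫ x, v x ^ 2 ∂ν := (le_div_iff₀ (by positivity)).1 hJ

end WeightedNorms

theorem stmt_4_general {Ω : Type*} [MeasurableSpace Ω] (ν : Measure Ω)
    (hνfin : ν Set.univ < ⊤)
    (r ε MP G : ℝ) (hr1 : 1 ≤ r) (hr2 : r < 2) (hε : 0 < ε) (hMP : 0 < MP)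
    (v : Ω → ℝ) (hvmeas : Measurable v)
    (hvr0 : 0 < wnorm ν r v) (hvr : Integrable (fun x => |v x| ^ r) ν)
    (hv2 : Integrable (fun x => |v x| ^ (2 : ℝ)) ν)
    (hpoin : wnorm ν 2 (fun x => v x - wmean ν v) ≤ MP * G) :
    (entropyJ ν r v + Real.log ε / (2 - r)) * (2 - r) * (wnorm ν r v) ^ 2 /
        (2 * ε * MP ^ 2) - (wmean ν v) ^ 2 * (ν Set.univ).toReal / MP ^ 2 ≤
      G ^ 2 := by
  have : IsFiniteMeasure ν := ⟨hνfin⟩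
  set m := wmean ν v
  set νΩ := (ν Set.univ).toReal
  have hvsq : Integrable (fun x => v x ^ 2) ν := by simpa only [rpow_two, sq_abs] using hv2
  have hL2 : ∫ x, v x ^ 2 ∂ν ≤ (MP * G) ^ 2 + m ^ 2 * νΩ := by
    have := pow_le_pow_left₀ (wnorm_nonneg _ _) hpoin 2
    rw [wnorm_two_sq, integral_sq_sub_wmean
      ((memLp_two_iff_integrable_sq hvmeas.aestronglyMeasurable).2 hvsq)] at this
    linarith
  have hJ := entropyJ_add_log_div_le (by linarith) hr2 hε hvmeas hvr0 hvr hvsq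
  calc _ ≤ ε * ((MP * G) ^ 2 + m ^ 2 * νΩ) / (2 * ε * MP ^ 2) - m ^ 2 * νΩ / MP ^ 2 := by
        gcongr ?_ / _ - _
        exact hJ.trans (by gcongr)
    _ = G ^ 2 / 2 - m ^ 2 * νΩ / (2 * MP ^ 2) := by
        field_simp
        ring
    _ ≤ G ^ 2 := by
        have : 0 ≤ m ^ 2 * νΩ / (2 * MP ^ 2) := by positivity
        nlinarith [sq_nonneg G]

/-- Per-function form of the logarithmic inequalities for the
Neumann problem: if `‖v - v̄‖_{2;ν} ≤ M_P G` then
`(J(r,v) + log ε/(2-r)) (2-r) ‖v‖_{r;ν}² / (2 ε M_P²) - v̄² ν(Ω)/M_P² ≤ G²`. -/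
theorem stmt_4 {Ω : Type*} [MeasurableSpace Ω] (ν : Measure Ω)
    (hν0 : 0 < ν Set.univ) (hνfin : ν Set.univ < ⊤)
    (r ε MP G : ℝ) (hr1 : 1 ≤ r) (hr2 : r < 2) (hε : 0 < ε) (hMP : 0 < MP)
    (hG : 0 ≤ G) (v : Ω → ℝ) (hvmeas : Measurable v)
    (hvr0 : 0 < wnorm ν r v) (hvr : Integrable (fun x => |v x| ^ r) ν)
    (hv2 : Integrable (fun x => |v x| ^ (2 : ℝ)) ν)
    (hpoin : wnorm ν 2 (fun x => v x - wmean ν v) ≤ MP * G) :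
    (entropyJ ν r v + Real.log ε / (2 - r)) * (2 - r) * (wnorm ν r v) ^ 2 /
        (2 * ε * MP ^ 2) - (wmean ν v) ^ 2 * (ν Set.univ).toReal / MP ^ 2 ≤
      G ^ 2 :=
  stmt_4_general ν hνfin r ε MP G hr1 hr2 hε hMP v hvmeas hvr0 hvr hv2 hpoin
end

section
/- Let m > 1. There exists a constant B > 0 such that the function v(x,t) = log(x+1) · (1 + B^{-1}(m-1)t)^{-1/(m-1)}, defined for x > 0 and t > 0, is a pointwise subsolution of the weighted porous media equation u_t = e^x (e^{-x}(u^m)_x)_x on (0,∞) × (0,∞); that is, for every x > 0 and t > 0, ∂_t v(x,t) ≤ e^x · d/dx( e^{-x} · d/dx( v(x,t)^m ) ), where the x-derivatives on the right-hand side are taken of the function x ↦ e^{-x}·d/dx((v(x,t))^m) at the point x. -/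
/-!
Separation of variables: `v = log (x + 1) * T t` with `T = (1 + B⁻¹ (m - 1) t) ^ (-1 / (m - 1))`,
which solves `T' = -B⁻¹ T ^ m`. Both sides of the inequality then carry the factor `T ^ m`, and it
remains to show `-B⁻¹ L ≤ e^x (e^{-x} (L ^ m)')'` for `L = log (x + 1)`. With `s = L`, `x + 1 = e^s`,
this reads `m s^(m-2) (s (e^s + 1) - (m - 1)) e^(-2s) ≤ B⁻¹ s`. The left side is nonpositive unless
`s ≥ s₀ = min 1 ((m - 1) / 4)`, and for such `s` the bound `s^m ≤ ⌈m⌉! e^s` makes it at most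
`2 m ⌈m⌉! s / s₀²`.
-/

open Real

/-- The family of functions `v_B(x,t) = log(x+1) · (1 + B⁻¹(m-1)t)^{-1/(m-1)}`. -/
noncomputable def subSol (m B x t : ℝ) : ℝ :=
  Real.log (x + 1) * (1 + B⁻¹ * (m - 1) * t) ^ (-(m - 1)⁻¹)

lemma rpow_le_factorial_ceil_mul_exp {s m : ℝ} (hs : 0 ≤ s) (hm : 0 ≤ m) :
    s ^ m ≤ (⌈m⌉₊.factorial : ℝ) * exp s := by
  have hfac : (1 : ℝ) ≤ ⌈m⌉₊.factorial := mod_cast ⌈m⌉₊.factorial_pos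
  rcases le_or_gt s 1 with hs1 | hs1
  · calc s ^ m ≤ 1 := rpow_le_one hs hs1 hm
      _ ≤ 1 * exp s := by simpa using one_le_exp hs
      _ ≤ _ := by gcongr
  · calc s ^ m ≤ s ^ (⌈m⌉₊ : ℝ) := rpow_le_rpow_of_exponent_le hs1.le (Nat.le_ceil m)
      _ = s ^ ⌈m⌉₊ := rpow_natCast s _
      _ ≤ _ := by
        have := Real.pow_div_factorial_le_exp s hs ⌈m⌉₊
        rwa [div_le_iff₀ (by positivity), mul_comm] at this

lemma min_one_le_of_sub_one_lt_mul_exp_add_one {s m : ℝ} (hs : 0 < s)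
    (h : m - 1 < s * (exp s + 1)) : min 1 ((m - 1) / 4) ≤ s := by
  rcases le_or_gt 1 s with hs1 | hs1
  · exact min_le_of_left_le hs1
  · have : exp s < 3 := (exp_lt_exp.2 hs1).trans (by simpa using exp_one_lt_d9.trans (by norm_num))
    refine min_le_of_right_le ?_
    nlinarith

lemma mul_rpow_sub_two_mul_div_exp_sq_le {s m : ℝ} (hm : 1 < m) (hs : 0 < s) :
    m * s ^ (m - 2) * (s * (exp s + 1) - (m - 1)) / exp s ^ 2
      ≤ 2 * m * ⌈m⌉₊.factorial / min 1 ((m - 1) / 4) ^ 2 * s := by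
  set s₀ := min 1 ((m - 1) / 4)
  have hs₀ : 0 < s₀ := lt_min one_pos (by linarith)
  have hX : 1 ≤ exp s := one_le_exp hs.le
  rcases le_or_gt (s * (exp s + 1) - (m - 1)) 0 with hneg | hpos
  · calc _ ≤ 0 := div_nonpos_of_nonpos_of_nonneg
          (mul_nonpos_of_nonneg_of_nonpos (by positivity) hneg) (by positivity)
      _ ≤ _ := by positivity
  · have hss₀ : s₀ ≤ s := min_one_le_of_sub_one_lt_mul_exp_add_one hs (by linarith)
    have hgrowth : s ^ (m - 2) ≤ ⌈m⌉₊.factorial / s₀ ^ 2 * exp s := by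
      have hpow : s ^ (m - 2) * s ^ 2 = s ^ m := by
        rw [← rpow_natCast, ← rpow_add hs]; norm_num
      rw [div_mul_eq_mul_div, le_div_iff₀ (by positivity)]
      calc s ^ (m - 2) * s₀ ^ 2 ≤ s ^ (m - 2) * s ^ 2 := by gcongr
        _ = s ^ m := hpow
        _ ≤ _ := rpow_le_factorial_ceil_mul_exp hs.le (by linarith)
    calc _ ≤ m * s ^ (m - 2) * (2 * s * exp s) / exp s ^ 2 := by gcongr; nlinarith
      _ = 2 * m * s * (s ^ (m - 2) / exp s) := by field_simp
      _ ≤ 2 * m * s * (⌈m⌉₊.factorial / s₀ ^ 2) := by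
          gcongr ?_ * ?_; exact (div_le_iff₀ (exp_pos s)).2 hgrowth
      _ = _ := by ring

lemma hasDerivAt_log_add_one_rpow {p x : ℝ} (hx : 0 < x) :
    HasDerivAt (fun z => log (z + 1) ^ p) (p * log (x + 1) ^ (p - 1) / (x + 1)) x := by
  have hlog : HasDerivAt (fun z => log (z + 1)) (x + 1)⁻¹ x := by
    simpa using ((hasDerivAt_id' x).add_const 1).log (by linarith)
  convert hlog.rpow_const (p := p) (Or.inl (log_pos (by linarith)).ne') using 1
  ring

lemma exp_mul_deriv_exp_neg_mul_deriv_log_add_one_rpow {p x : ℝ} (hx : 0 < x) :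
    exp x * deriv (fun y => exp (-y) * deriv (fun z => log (z + 1) ^ p) y) x
      = -p * log (x + 1) ^ (p - 1) / (x + 1) - p * log (x + 1) ^ (p - 1) / (x + 1) ^ 2
        + p * (p - 1) * log (x + 1) ^ (p - 2) / (x + 1) ^ 2 := by
  have hinner : Set.EqOn (fun y => exp (-y) * deriv (fun z => log (z + 1) ^ p) y)
      (fun y => exp (-y) * (p * log (y + 1) ^ (p - 1) / (y + 1))) (Set.Ioi 0) :=
    fun y hy => by simp only [(hasDerivAt_log_add_one_rpow hy).deriv]
  have hexp : HasDerivAt (fun y => exp (-y)) (-exp (-x)) x := by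
    simpa using (hasDerivAt_neg x).exp
  have hshift : HasDerivAt (fun y : ℝ => y + 1) 1 x := (hasDerivAt_id' x).add_const 1
  have hderiv := hexp.mul (((hasDerivAt_log_add_one_rpow (p := p - 1) hx).const_mul p).div
    hshift (by linarith))
  simp only [Pi.mul_def, Pi.div_def] at hderiv
  rw [hinner.deriv isOpen_Ioi hx, hderiv.deriv, exp_neg]
  have : x + 1 ≠ 0 := by linarith
  have : exp x ≠ 0 := (exp_pos x).ne'
  rw [show p - 1 - 1 = p - 2 by ring]
  field_simp
  ring

lemma exists_neg_mul_log_add_one_le_exp_mul_deriv_exp_neg_mul_deriv {m : ℝ} (hm : 1 < m) :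
    ∃ C > 0, ∀ x > 0, -(C * log (x + 1))
      ≤ exp x * deriv (fun y => exp (-y) * deriv (fun z => log (z + 1) ^ m) y) x := by
  have hs₀ : 0 < min 1 ((m - 1) / 4) := lt_min one_pos (by linarith)
  refine ⟨2 * m * ⌈m⌉₊.factorial / min 1 ((m - 1) / 4) ^ 2, by positivity, fun x hx => ?_⟩
  have hs : 0 < log (x + 1) := log_pos (by linarith)
  have hbound := mul_rpow_sub_two_mul_div_exp_sq_le hm hs
  rw [exp_log (by linarith)] at hbound
  rw [exp_mul_deriv_exp_neg_mul_deriv_log_add_one_rpow hx]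
  set s := log (x + 1)
  have hpow : s ^ (m - 1) = s ^ (m - 2) * s := by
    rw [← rpow_add_one hs.ne']; ring_nf
  have : x + 1 ≠ 0 := by linarith
  have hid : -m * s ^ (m - 1) / (x + 1) - m * s ^ (m - 1) / (x + 1) ^ 2
      + m * (m - 1) * s ^ (m - 2) / (x + 1) ^ 2
      = -(m * s ^ (m - 2) * (s * (x + 1 + 1) - (m - 1)) / (x + 1) ^ 2) := by
    rw [hpow]; field_simp; ring
  linarith

lemma hasDerivAt_one_add_mul_rpow_neg_inv {k m t : ℝ} (hm : m ≠ 1)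
    (hc : 0 < 1 + k * (m - 1) * t) :
    HasDerivAt (fun τ => (1 + k * (m - 1) * τ) ^ (-(m - 1)⁻¹))
      (-k * ((1 + k * (m - 1) * t) ^ (-(m - 1)⁻¹)) ^ m) t := by
  have hlin : HasDerivAt (fun τ => 1 + k * (m - 1) * τ) (k * (m - 1)) t := by
    simpa using ((hasDerivAt_id' t).const_mul (k * (m - 1))).const_add 1
  convert hlin.rpow_const (p := -(m - 1)⁻¹) (Or.inl hc.ne') using 1
  have hm1 : m - 1 ≠ 0 := sub_ne_zero.2 hm
  rw [← rpow_mul hc.le, show -(m - 1)⁻¹ * m = -(m - 1)⁻¹ - 1 by field_simp; ring]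
  field_simp

lemma deriv_exp_neg_mul_deriv_mul_rpow {f : ℝ → ℝ} {a m x : ℝ} (ha : 0 ≤ a)
    (hf : ∀ z > 0, 0 ≤ f z) (hx : 0 < x) :
    deriv (fun y => exp (-y) * deriv (fun z => (f z * a) ^ m) y) x
      = a ^ m * deriv (fun y => exp (-y) * deriv (fun z => f z ^ m) y) x := by
  have hpow : Set.EqOn (fun z => (f z * a) ^ m) (fun z => a ^ m * f z ^ m) (Set.Ioi 0) :=
    fun z hz => (mul_rpow (hf z hz) ha).trans (mul_comm _ _)
  have hinner : Set.EqOn (fun y => exp (-y) * deriv (fun z => (f z * a) ^ m) y)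
      (fun y => a ^ m * (exp (-y) * deriv (fun z => f z ^ m) y)) (Set.Ioi 0) := fun y hy => by
    simp only [hpow.deriv isOpen_Ioi hy, deriv_const_mul_field']
    ring
  rw [hinner.deriv isOpen_Ioi hx, deriv_const_mul_field']

/-- Counterexample to `L^∞` regularization for the Dirichlet
problem with weights `ρ_ν = ρ_μ = e^{-x}` on `(0,∞)`: for a suitable `B > 0` the
function `v(x,t) = log(x+1)(1 + B⁻¹(m-1)t)^{-1/(m-1)}` is a pointwise subsolution
of `u_t = e^x (e^{-x}(u^m)_x)_x`. -/
theorem stmt_9 (m : ℝ) (hm : 1 < m) :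
    ∃ B : ℝ, 0 < B ∧ ∀ x : ℝ, 0 < x → ∀ t : ℝ, 0 < t →
      deriv (fun τ => subSol m B x τ) t ≤
        Real.exp x *
          deriv (fun y => Real.exp (-y) * deriv (fun z => (subSol m B z t) ^ m) y)
            x := by
  obtain ⟨C, hC, hspace⟩ := exists_neg_mul_log_add_one_le_exp_mul_deriv_exp_neg_mul_deriv hm
  refine ⟨C⁻¹, inv_pos.2 hC, fun x hx t ht => ?_⟩
  have hc : 0 < 1 + C⁻¹⁻¹ * (m - 1) * t := by
    have : 0 < C⁻¹⁻¹ * (m - 1) * t := by have := sub_pos.2 hm; positivity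
    linarith
  set T := (1 + C⁻¹⁻¹ * (m - 1) * t) ^ (-(m - 1)⁻¹)
  have hT : 0 ≤ T := rpow_nonneg hc.le _
  have htime : deriv (fun τ => subSol m C⁻¹ x τ) t = T ^ m * -(C⁻¹⁻¹ * log (x + 1)) :=
    ((hasDerivAt_one_add_mul_rpow_neg_inv hm.ne' hc).const_mul (log (x + 1))).deriv.trans
      (by ring)
  have hhomog := deriv_exp_neg_mul_deriv_mul_rpow (f := fun z => log (z + 1)) (m := m)
    hT (fun z hz => log_nonneg (by linarith)) hx
  rw [htime, show (fun z => subSol m C⁻¹ z t ^ m) = fun z => (log (z + 1) * T) ^ m from rfl,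
    hhomog, ← mul_left_comm, inv_inv]
  exact mul_le_mul_of_nonneg_left (hspace x hx) (rpow_nonneg hT m)
end

section
/- Let m ≥ 2, β > 1 and r₀ ∈ (0,1). Define r(t) = r₀ e^{-m(β+2(m-1))t} for t > 0, and û(x,t) = 2x/r(t) - 1. Then for every t > 0 and every x with r(t)/2 < x < r(t), the pointwise supersolution inequality x^{β-2} ∂_t û(x,t) ≥ d/dx( x^β · d/dx( û(x,t)^m ) ) holds, where the x-derivatives on the right-hand side are taken of the function x ↦ x^β·d/dx((û(x,t))^m) at the point x. -/
/-!
With `r = r(t)` and `u = 2x/r - 1`, both sides are explicit: `∂_t û = 2cx/r` with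
`c = m(β + 2(m-1))`, and the right-hand side is
`2mβ x^{β-1} u^{m-1}/r + 4m(m-1) x^β u^{m-2}/r²`. After dividing by `2m x^{β-1}/r`
the inequality reads `β u^{m-1} + 2(m-1) u^{m-2} (x/r) ≤ β + 2(m-1)`, which holds termwise
because `0 < u < 1`, `m ≥ 2` and `x < r`: the exponent `c` is chosen exactly for this.
-/

open Real

theorem hasDerivAt_div_mul_exp_neg_mul (a r₀ c t : ℝ) :
    HasDerivAt (fun τ => a / (r₀ * exp (-c * τ))) (a * c / (r₀ * exp (-c * t))) t := by
  have hrw : ∀ τ, a / (r₀ * exp (-c * τ)) = a / r₀ * exp (c * τ) := fun τ => by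
    rw [div_mul_eq_div_div, neg_mul, exp_neg, div_inv_eq_mul]
  simp only [hrw]
  refine ((((hasDerivAt_id t).const_mul c).exp).const_mul (a / r₀)).congr_deriv ?_
  rw [mul_div_right_comm, hrw, id, mul_one]
  ring

section Profile

variable {r : ℝ}

theorem hasDerivAt_profile_rpow (p : ℝ) {y : ℝ} (hy : 2 * y / r - 1 ≠ 0) :
    HasDerivAt (fun z => (2 * z / r - 1) ^ p) (p * (2 * y / r - 1) ^ (p - 1) * (2 / r)) y := by
  have hlin : HasDerivAt (fun z : ℝ => 2 * z / r - 1) (2 / r) y := by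
    simpa using (((hasDerivAt_id y).const_mul 2).div_const r).sub_const 1
  convert hlin.rpow_const (p := p) (Or.inl hy) using 1
  ring

theorem deriv_rpow_mul_deriv_profile_rpow (β m : ℝ) {x : ℝ} (hx : x ≠ 0)
    (hu : 2 * x / r - 1 ≠ 0) :
    deriv (fun y => y ^ β * deriv (fun z => (2 * z / r - 1) ^ m) y) x =
      β * x ^ (β - 1) * (m * (2 * x / r - 1) ^ (m - 1) * (2 / r)) +
        x ^ β * (m * (m - 1) * (2 * x / r - 1) ^ (m - 2) * (2 / r) ^ 2) := by
  have hnhds : {y : ℝ | 2 * y / r - 1 ≠ 0} ∈ nhds x :=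
    (isOpen_ne_fun (by fun_prop) continuous_const).mem_nhds hu
  have hflux : (fun y => y ^ β * deriv (fun z => (2 * z / r - 1) ^ m) y) =ᶠ[nhds x]
      fun y => y ^ β * (m * (2 * y / r - 1) ^ (m - 1) * (2 / r)) := by
    filter_upwards [hnhds] with y hy
    rw [(hasDerivAt_profile_rpow m hy).deriv]
  rw [hflux.deriv_eq]
  have hpow : HasDerivAt (fun y : ℝ => y ^ β) (β * x ^ (β - 1)) x :=
    hasDerivAt_rpow_const (Or.inl hx)
  have hinner := ((hasDerivAt_profile_rpow (m - 1) hu).const_mul m).mul_const (2 / r)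
  have hflux_deriv : HasDerivAt (fun y => y ^ β * (m * (2 * y / r - 1) ^ (m - 1) * (2 / r))) _ x :=
    hpow.mul hinner
  rw [hflux_deriv.deriv, show m - 1 - 1 = m - 2 by ring]
  ring

end Profile

theorem flux_le_of_lt_of_mem_Ioo {β m x r u : ℝ} (hβ : 0 ≤ β) (hm : 2 ≤ m) (hx : 0 < x)
    (hxr : x < r) (hu : u ∈ Set.Ioo (0 : ℝ) 1) :
    β * x ^ (β - 1) * (m * u ^ (m - 1) * (2 / r)) +
        x ^ β * (m * (m - 1) * u ^ (m - 2) * (2 / r) ^ 2) ≤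
      x ^ (β - 2) * (2 * x * (m * (β + 2 * (m - 1))) / r) := by
  have hr : 0 < r := hx.trans hxr
  have hu₁ : u ^ (m - 1) ≤ 1 := rpow_le_one hu.1.le hu.2.le (by linarith)
  have hu₂ : u ^ (m - 2) ≤ 1 := rpow_le_one hu.1.le hu.2.le (by linarith)
  have hu₂x : u ^ (m - 2) * (x / r) ≤ 1 :=
    mul_le_one₀ hu₂ (div_pos hx hr).le ((div_le_one hr).2 hxr.le)
  have hxβ : x ^ β = x ^ (β - 1) * x := by
    rw [← rpow_add_one hx.ne']; ring_nf
  have hxβ₂ : x ^ (β - 2) * x = x ^ (β - 1) := by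
    rw [← rpow_add_one hx.ne']; ring_nf
  have hscale : 0 ≤ 2 * m * x ^ (β - 1) / r := by positivity
  calc β * x ^ (β - 1) * (m * u ^ (m - 1) * (2 / r)) +
          x ^ β * (m * (m - 1) * u ^ (m - 2) * (2 / r) ^ 2)
        = 2 * m * x ^ (β - 1) / r * (β * u ^ (m - 1) + 2 * (m - 1) * (u ^ (m - 2) * (x / r))) := by
          rw [hxβ]; field_simp
    _ ≤ 2 * m * x ^ (β - 1) / r * (β + 2 * (m - 1)) := by
          refine mul_le_mul_of_nonneg_left (add_le_add ?_ ?_) hscale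
          · exact mul_le_of_le_one_right hβ hu₁
          · exact mul_le_of_le_one_right (by linarith) hu₂x
    _ = x ^ (β - 2) * (2 * x * (m * (β + 2 * (m - 1))) / r) := by
          rw [← hxβ₂]; field_simp

theorem stmt_12_general (m β r₀ : ℝ) (hm : 2 ≤ m) (hβ : 1 < β) :
    ∀ t : ℝ, 0 < t →
      ∀ x : ℝ, r₀ * Real.exp (-(m * (β + 2 * (m - 1))) * t) / 2 < x →
        x < r₀ * Real.exp (-(m * (β + 2 * (m - 1))) * t) →
        x ^ (β - 2) *
            deriv
              (fun τ => 2 * x / (r₀ * Real.exp (-(m * (β + 2 * (m - 1))) * τ)) - 1)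
              t ≥
          deriv
            (fun y => y ^ β *
              deriv
                (fun z =>
                  (2 * z / (r₀ * Real.exp (-(m * (β + 2 * (m - 1))) * t)) - 1) ^ m)
                y)
            x := by
  intro t _ x hx₁ hx₂
  set r := r₀ * exp (-(m * (β + 2 * (m - 1))) * t)
  have hr : 0 < r := by linarith
  have hx : 0 < x := by linarith
  have hu : 2 * x / r - 1 ∈ Set.Ioo (0 : ℝ) 1 := by
    constructor
    · rw [sub_pos, lt_div_iff₀ hr]; linarith
    · rw [sub_lt_iff_lt_add, div_lt_iff₀ hr]; linarith
  rw [((hasDerivAt_div_mul_exp_neg_mul _ _ _ t).sub_const 1).deriv,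
    deriv_rpow_mul_deriv_profile_rpow β m hx.ne' hu.1.ne']
  exact flux_le_of_lt_of_mem_Ioo (by linarith) hm hx hx₂ hu

/-- Key computation in the counterexample to uniform convergence
to the mean value for the Neumann problem on `Ω = (0,1)` with weights
`ρ_ν(x) = x^{β-2}`, `ρ_μ(x) = x^β`: with `r(t) = r₀ e^{-m(β+2(m-1))t}` and
`û(x,t) = 2x/r(t) - 1`, on the region `r(t)/2 < x < r(t)` the inequality
`x^{β-2} ∂_t û ≥ (x^β (û^m)_x)_x` holds pointwise. -/
theorem stmt_12 (m β r₀ : ℝ) (hm : 2 ≤ m) (hβ : 1 < β)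
    (hr₀ : r₀ ∈ Set.Ioo (0 : ℝ) 1) :
    ∀ t : ℝ, 0 < t →
      ∀ x : ℝ, r₀ * Real.exp (-(m * (β + 2 * (m - 1))) * t) / 2 < x →
        x < r₀ * Real.exp (-(m * (β + 2 * (m - 1))) * t) →
        x ^ (β - 2) *
            deriv
              (fun τ => 2 * x / (r₀ * Real.exp (-(m * (β + 2 * (m - 1))) * τ)) - 1)
              t ≥
          deriv
            (fun y => y ^ β *
              deriv
                (fun z =>
                  (2 * z / (r₀ * Real.exp (-(m * (β + 2 * (m - 1))) * t)) - 1) ^ m)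
                y)
            x :=
  stmt_12_general m β r₀ hm hβ
end

section
/- Let m > 1, β > 1 and r₀ ∈ (0,1). Define r(t) = r₀ e^{-m(β+m-1)t} for t > 0, and ũ(x,t) = x/r(t). Then for every t > 0 and every x with 0 < x < r(t), the pointwise supersolution inequality x^{β-2} ∂_t ũ(x,t) ≥ d/dx( x^β · d/dx( ũ(x,t)^m ) ) holds; explicitly, -r'(t)/r(t)² ≥ m(β+m-1) x^{m-1}/r(t)^m for all x ∈ (0, r(t)). -/
open Real

/-!
Write `c = m(β+m-1) ≥ 0` and `r = r(t)`. Since `r' = -c r`, the time side is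
`x^{β-2} ∂_t ũ = x^{β-1} · c/r`, while the flux `x^β ∂_x(ũ^m) = (m/r^m) x^{β+m-1}` has
derivative `x^{β-1} · c x^{m-1}/r^m`. Both inequalities thus reduce to
`c x^{m-1}/r^m ≤ c/r`, which is `x^{m-1} ≤ r^{m-1}` for `0 < x ≤ r` and `m ≥ 1`.
-/

theorem hasDerivAt_mul_exp_mul (a k τ : ℝ) :
    HasDerivAt (fun τ => a * exp (k * τ)) (k * (a * exp (k * τ))) τ :=
  ((((hasDerivAt_id' τ).const_mul k).exp).const_mul a).congr_deriv (by ring)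

theorem deriv_div_mul_exp_mul (x a k t : ℝ) (ha : a ≠ 0) :
    deriv (fun τ => x / (a * exp (k * τ))) t = -k * (x / (a * exp (k * t))) := by
  have hden : a * exp (k * t) ≠ 0 := mul_ne_zero ha (exp_pos _).ne'
  have h : HasDerivAt (fun τ => x / (a * exp (k * τ))) _ t :=
    (hasDerivAt_const t x).div (hasDerivAt_mul_exp_mul a k t) hden
  rw [h.deriv]
  field_simp
  ring

theorem deriv_rpow_mul_deriv_div_rpow {r m x : ℝ} (β : ℝ) (hr : 0 < r) (hm : 1 ≤ m)
    (hx : 0 < x) :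
    deriv (fun y => y ^ β * deriv (fun z => (z / r) ^ m) y) x =
      m * (β + m - 1) * x ^ (β + m - 2) / r ^ m := by
  have hflux : (fun y => y ^ β * deriv (fun z => (z / r) ^ m) y)
      =ᶠ[nhds x] fun y => m / r ^ m * y ^ (β + m - 1) := by
    filter_upwards [Ioi_mem_nhds hx] with y (hy : 0 < y)
    have h : HasDerivAt (fun z => (z / r) ^ m) (1 / r * m * (y / r) ^ (m - 1)) y :=
      ((hasDerivAt_id y).div_const r).rpow_const (Or.inr hm)
    rw [h.deriv,
      div_rpow hy.le hr.le, show β + m - 1 = β + (m - 1) by ring, rpow_add hy,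
      show r ^ m = r ^ (m - 1) * r by rw [← rpow_add_one hr.ne']; norm_num]
    field_simp
  rw [hflux.deriv_eq,
    ((hasDerivAt_rpow_const (p := β + m - 1) (Or.inl hx.ne')).const_mul _).deriv,
    show β + m - 1 - 1 = β + m - 2 by ring]
  ring

section

variable {c x r m : ℝ}

theorem mul_rpow_sub_one_div_rpow_le (hc : 0 ≤ c) (hx : 0 < x) (hxr : x ≤ r) (hm : 1 ≤ m) :
    c * x ^ (m - 1) / r ^ m ≤ c / r := by
  have hr : 0 < r := hx.trans_le hxr
  calc c * x ^ (m - 1) / r ^ m ≤ c * r ^ (m - 1) / r ^ m := by gcongr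
    _ = c / r := by
        rw [rpow_sub_one hr.ne']
        field_simp

theorem mul_rpow_add_sub_two_div_rpow_le (β : ℝ) (hc : 0 ≤ c) (hx : 0 < x) (hxr : x ≤ r)
    (hm : 1 ≤ m) : c * x ^ (β + m - 2) / r ^ m ≤ x ^ (β - 2) * (c * (x / r)) := by
  have hxβ : x ^ (β - 2) * x = x ^ (β - 1) := by
    rw [← rpow_add_one hx.ne']
    ring_nf
  have hxm : x ^ (β - 1) * x ^ (m - 1) = x ^ (β + m - 2) := by
    rw [← rpow_add hx]
    ring_nf
  calc c * x ^ (β + m - 2) / r ^ m = x ^ (β - 1) * (c * x ^ (m - 1) / r ^ m) := by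
        rw [← hxm]
        ring
    _ ≤ x ^ (β - 1) * (c / r) :=
        mul_le_mul_of_nonneg_left (mul_rpow_sub_one_div_rpow_le hc hx hxr hm) (by positivity)
    _ = x ^ (β - 2) * (c * (x / r)) := by
        rw [← hxβ]
        ring

end

/-- The supersolution computation covering `1 < m < 2` in the
counterexample to uniform convergence to the mean value for the Neumann problem on
`Ω = (0,1)` with weights `ρ_ν(x) = x^{β-2}`, `ρ_μ(x) = x^β`: with
`r(t) = r₀ e^{-m(β+m-1)t}` and `ũ(x,t) = x/r(t)`, on the region `0 < x < r(t)`
one has `x^{β-2} ∂_t ũ ≥ (x^β (ũ^m)_x)_x`; explicitly,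
`-r'(t)/r(t)² ≥ m(β+m-1) x^{m-1}/r(t)^m`. -/
theorem stmt_13 (m β r₀ : ℝ) (hm : 1 < m) (hβ : 1 < β)
    (hr₀ : r₀ ∈ Set.Ioo (0 : ℝ) 1) :
    ∀ t : ℝ, 0 < t →
      ∀ x : ℝ, 0 < x → x < r₀ * Real.exp (-(m * (β + m - 1)) * t) →
        (x ^ (β - 2) *
            deriv (fun τ => x / (r₀ * Real.exp (-(m * (β + m - 1)) * τ))) t ≥
          deriv
            (fun y => y ^ β *
              deriv
                (fun z => (z / (r₀ * Real.exp (-(m * (β + m - 1)) * t))) ^ m) y)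
            x) ∧
        -(deriv (fun τ => r₀ * Real.exp (-(m * (β + m - 1)) * τ)) t) /
            (r₀ * Real.exp (-(m * (β + m - 1)) * t)) ^ 2 ≥
          m * (β + m - 1) * x ^ (m - 1) /
            (r₀ * Real.exp (-(m * (β + m - 1)) * t)) ^ m := by
  intro t _ x hx hxr
  obtain ⟨hr₀, -⟩ := hr₀
  rw [deriv_div_mul_exp_mul x r₀ _ t hr₀.ne', deriv_rpow_mul_deriv_div_rpow β (by positivity)
    hm.le hx, (hasDerivAt_mul_exp_mul r₀ _ t).deriv, neg_neg]
  set c := m * (β + m - 1)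
  set r := r₀ * exp (-c * t)
  have hc : 0 ≤ c := mul_nonneg (by linarith) (by linarith)
  refine ⟨mul_rpow_add_sub_two_div_rpow_le β hc hx hxr.le hm.le, ?_⟩
  have hr : 0 < r := by positivity
  calc c * x ^ (m - 1) / r ^ m ≤ c / r := mul_rpow_sub_one_div_rpow_le hc hx hxr.le hm.le
    _ = -(-c * r) / r ^ 2 := by field_simp
end

section
/- Let α ∈ ℝ with α ≠ 0. There exists a constant C_P > 0 such that for every φ ∈ C_c^∞(ℝ) one has ∫_ℝ φ(x)² e^{αx} dx ≤ C_P² ∫_ℝ φ'(x)² e^{αx} dx. -/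
open Real MeasureTheory Set

set_option maxHeartbeats 1000000

/-- Weighted Poincaré inequality for the exponential weight pair
`(e^{αx}, e^{αx})` on `ℝ`, `α ≠ 0`, on the core `C_c^∞(ℝ)`. -/
theorem stmt_17 (α : ℝ) (hα : α ≠ 0) :
    ∃ CP : ℝ, 0 < CP ∧ ∀ φ : ℝ → ℝ, ContDiff ℝ (⊤ : ℕ∞) φ → HasCompactSupport φ →
      (∫ x : ℝ, φ x ^ 2 * Real.exp (α * x)) ≤
        CP ^ 2 * ∫ x : ℝ, deriv φ x ^ 2 * Real.exp (α * x) := by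
  have hαpos : 0 < |α| := abs_pos.mpr hα
  refine ⟨2 / |α|, by positivity, fun φ hφ hφs => ?_⟩
  have hφd : Differentiable ℝ φ := hφ.differentiable (by simp)
  have hφc : Continuous φ := hφ.continuous
  have hφ'c : Continuous (deriv φ) := hφ.continuous_deriv (by simp)
  -- define g
  set g : ℝ → ℝ := fun x => φ x ^ 2 * Real.exp (α * x) with hg
  have hgs : HasCompactSupport g := by
    apply HasCompactSupport.intro hφs.isCompact
    intro x hx
    simp [hg, image_eq_zero_of_notMem_tsupport hx]
  have hgderiv : ∀ x, HasDerivAt g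
      ((2 * φ x * deriv φ x + α * φ x ^ 2) * Real.exp (α * x)) x := by
    intro x
    have h1 : HasDerivAt (fun x => φ x ^ 2) (2 * φ x * deriv φ x) x := by
      simpa [mul_comm, mul_assoc, mul_left_comm] using
        ((hφd x).hasDerivAt.fun_pow 2)
    have h2 : HasDerivAt (fun x => Real.exp (α * x)) (α * Real.exp (α * x)) x := by
      simpa [mul_comm, Function.comp_def] using (Real.hasDerivAt_exp (α * x)).comp x
        ((hasDerivAt_id x).const_mul α)
    simpa [hg] using (h1.fun_mul h2).congr_deriv (by ring)
  have hgC1 : ContDiff ℝ 1 g := by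
    exact ((hφ.pow 2).mul ((contDiff_const.mul contDiff_id).exp)).of_le (by simp)
  have hint0 : ∫ x : ℝ, deriv g x = 0 := by
    have h1 := hgs.integral_Iic_deriv_eq hgC1 0
    have h2 := hgs.integral_Ioi_deriv_eq hgC1 0
    have hint : Integrable (deriv g) :=
      (hgC1.continuous_deriv le_rfl).integrable_of_hasCompactSupport hgs.deriv
    rw [← intervalIntegral.integral_Iic_add_Ioi hint.integrableOn hint.integrableOn, h1, h2]
    ring
  -- integrability of pieces
  have hexpc : Continuous (fun x : ℝ => Real.exp (α * x)) :=
    (continuous_const.mul continuous_id).rexp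
  have hI : Integrable (fun x => φ x ^ 2 * Real.exp (α * x)) := by
    apply Continuous.integrable_of_hasCompactSupport (by continuity)
    apply HasCompactSupport.intro hφs.isCompact
    intro x hx; simp [image_eq_zero_of_notMem_tsupport hx]
  have hJ : Integrable (fun x => deriv φ x ^ 2 * Real.exp (α * x)) := by
    apply Continuous.integrable_of_hasCompactSupport (by continuity)
    apply HasCompactSupport.intro hφs.isCompact
    intro x hx
    have : deriv φ x = 0 := by
      by_contra h
      exact hx (support_deriv_subset (by simpa using h))
    simp [this]
  have hK : Integrable (fun x => φ x * deriv φ x * Real.exp (α * x)) := by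
    apply Continuous.integrable_of_hasCompactSupport (by continuity)
    apply HasCompactSupport.intro hφs.isCompact
    intro x hx; simp [image_eq_zero_of_notMem_tsupport hx]
  set I := ∫ x : ℝ, φ x ^ 2 * Real.exp (α * x) with hIdef
  set J := ∫ x : ℝ, deriv φ x ^ 2 * Real.exp (α * x) with hJdef
  set K := ∫ x : ℝ, φ x * deriv φ x * Real.exp (α * x) with hKdef
  have hInn : 0 ≤ I := integral_nonneg fun x => by positivity
  have hJnn : 0 ≤ J := integral_nonneg fun x => by positivity
  -- linear identity from integration by parts
  have hfun : deriv g = fun x =>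
      2 * (φ x * deriv φ x * Real.exp (α * x)) + α * (φ x ^ 2 * Real.exp (α * x)) :=
    funext fun x => by rw [(hgderiv x).deriv]; ring
  rw [hfun, integral_add (hK.const_mul 2) (hI.const_mul α),
    integral_const_mul, integral_const_mul] at hint0
  -- bound |K|
  have hKb : |K| ≤ |α| / 4 * I + 1 / |α| * J := by
    calc |K| ≤ ∫ x : ℝ, |φ x| * |deriv φ x| * Real.exp (α * x) := by
          simpa [Real.norm_eq_abs, abs_mul, Real.abs_exp] using
            norm_integral_le_integral_norm (μ := volume)
              (fun x => φ x * deriv φ x * Real.exp (α * x))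
      _ ≤ ∫ x : ℝ, (|α| / 4 * (φ x ^ 2 * Real.exp (α * x)) +
            1 / |α| * (deriv φ x ^ 2 * Real.exp (α * x))) := by
          apply integral_mono _ ((hI.const_mul _).add (hJ.const_mul _))
          · intro x
            dsimp only
            have he : (0:ℝ) < Real.exp (α * x) := Real.exp_pos _
            have h2 : |φ x| * |deriv φ x| ≤ |α| / 4 * φ x ^ 2 + 1 / |α| * deriv φ x ^ 2 := by
              have hq : |α| / 4 * φ x ^ 2 + 1 / |α| * deriv φ x ^ 2
                  = |α| / 4 * |φ x| ^ 2 + 1 / |α| * |deriv φ x| ^ 2 := by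
                rw [sq_abs, sq_abs]
              rw [hq, ← mul_le_mul_iff_right₀ hαpos]
              have hr : |α| * (|α| / 4 * |φ x| ^ 2 + 1 / |α| * |deriv φ x| ^ 2)
                  = |α| ^ 2 / 4 * |φ x| ^ 2 + |deriv φ x| ^ 2 := by
                field_simp
              rw [hr]
              nlinarith [sq_nonneg (|α| / 2 * |φ x| - |deriv φ x|)]
            simp only [Pi.add_apply]
            nlinarith [mul_le_mul_of_nonneg_right h2 he.le]
          · exact (hφc.abs.mul hφ'c.abs).mul hexpc |>.integrable_of_hasCompactSupport <| by
              apply HasCompactSupport.intro hφs.isCompact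
              intro x hx; simp [image_eq_zero_of_notMem_tsupport hx]
      _ = |α| / 4 * I + 1 / |α| * J := by
          rw [integral_add (hI.const_mul _) (hJ.const_mul _),
            integral_const_mul, integral_const_mul]
  rw [← hKdef, ← hIdef] at hint0
  clear_value I J K
  have habsI : |α| * I = 2 * |K| := by
    have : α * I = -2 * K := by linarith
    calc |α| * I = |α * I| := by rw [abs_mul, abs_of_nonneg hInn]
      _ = |(-2 : ℝ) * K| := by rw [this]
      _ = 2 * |K| := by rw [abs_mul]; norm_num
  have h1 : |α| * I ≤ |α| / 2 * I + 2 * (1 / |α|) * J := by linarith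
  have h2 : |α| / 2 * I ≤ 2 * (1 / |α|) * J := by linarith
  calc I = 2 / |α| * (|α| / 2 * I) := by field_simp
    _ ≤ 2 / |α| * (2 * (1 / |α|) * J) :=
        mul_le_mul_of_nonneg_left h2 (by positivity)
    _ = (2 / |α|) ^ 2 * J := by ring
end

section
/- Let N ≥ 1, R > 0, let Ω = { x ∈ ℝ^N : |x| > R }, and let β ∈ ℝ with β ≠ 2 - N. There exists a constant C_P > 0 such that for every φ ∈ C_c^∞(Ω) one has ∫_Ω φ(x)² |x|^{β-2} dx ≤ C_P² ∫_Ω ‖∇φ(x)‖² |x|^β dx. -/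
open Real MeasureTheory Set
open scoped ContDiff

/-- The smooth cutoff weight `x ↦ χ(|x|) * (|x|^2)^p`, equal to `|x|^{2p}` on `{|x| > R}`
and vanishing near the origin. -/
noncomputable def auxW (N : ℕ) (R p : ℝ) (x : EuclideanSpace ℝ (Fin N)) : ℝ :=
  Real.smoothTransition ((4 * ‖x‖ ^ 2 - R ^ 2) / (3 * R ^ 2)) * (‖x‖ ^ 2 : ℝ) ^ p

lemma auxW_smooth (N : ℕ) (R : ℝ) (hR : 0 < R) (p : ℝ) :
    ContDiff ℝ ∞ (auxW N R p) := by
  rw [contDiff_iff_contDiffAt]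
  intro x
  rcases eq_or_ne x 0 with rfl | hx
  · have hev : auxW N R p =ᶠ[nhds 0] (fun _ => (0:ℝ)) := by
      have hball : Metric.ball (0 : EuclideanSpace ℝ (Fin N)) (R / 2) ∈ nhds
          (0 : EuclideanSpace ℝ (Fin N)) := Metric.ball_mem_nhds _ (by positivity)
      filter_upwards [hball] with y hy
      have hy' : ‖y‖ < R / 2 := by simpa using hy
      have h1 : (4 * ‖y‖ ^ 2 - R ^ 2) / (3 * R ^ 2) ≤ 0 := by
        apply div_nonpos_of_nonpos_of_nonneg
        · nlinarith [norm_nonneg y]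
        · positivity
      rw [auxW, Real.smoothTransition.zero_of_nonpos h1, zero_mul]
    exact (contDiffAt_const (c := (0:ℝ))).congr_of_eventuallyEq hev
  · have hq : (0:ℝ) < ‖x‖ ^ 2 := pow_pos (norm_pos_iff.mpr hx) 2
    have hqs : ContDiffAt ℝ ∞ (fun y : EuclideanSpace ℝ (Fin N) => (‖y‖ ^ 2 : ℝ)) x :=
      (contDiff_norm_sq ℝ).contDiffAt
    have h1 : ContDiffAt ℝ ∞ (fun y : EuclideanSpace ℝ (Fin N) =>
        Real.smoothTransition ((4 * ‖y‖ ^ 2 - R ^ 2) / (3 * R ^ 2))) x :=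
      Real.smoothTransition.contDiffAt.comp x
        (((contDiffAt_const.mul hqs).sub contDiffAt_const).div_const _)
    have h2 : ContDiffAt ℝ ∞ (fun y : EuclideanSpace ℝ (Fin N) => (‖y‖ ^ 2 : ℝ) ^ p) x :=
      hqs.rpow_const_of_ne (ne_of_gt hq)
    exact h1.mul h2

lemma auxW_eq (N : ℕ) (R : ℝ) (hR : 0 < R) (p : ℝ) (x : EuclideanSpace ℝ (Fin N))
    (hx : R < ‖x‖) : auxW N R p x = ‖x‖ ^ (2 * p) := by
  have h1 : (1:ℝ) ≤ (4 * ‖x‖ ^ 2 - R ^ 2) / (3 * R ^ 2) := by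
    rw [le_div_iff₀ (by positivity)]
    nlinarith
  rw [auxW, Real.smoothTransition.one_of_one_le h1, one_mul]
  rw [Real.rpow_mul (norm_nonneg x)]
  norm_num

/-- The key derivative computation for the vector field components on `{|x| > R}`. -/
lemma auxW_hasFDerivAt (N : ℕ) (R : ℝ) (hR : 0 < R) (p : ℝ) (i : Fin N)
    (x : EuclideanSpace ℝ (Fin N)) (hx : R < ‖x‖) :
    HasFDerivAt (fun y : EuclideanSpace ℝ (Fin N) => auxW N R p y * y i)
      (((‖x‖ ^ 2 : ℝ) ^ p) • EuclideanSpace.proj i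
        + (x i) • ((p * (‖x‖ ^ 2 : ℝ) ^ (p - 1)) • (2 • innerSL ℝ x))) x := by
  have hx0 : (0:ℝ) < ‖x‖ := lt_trans hR hx
  have hq0 : (0:ℝ) < ‖x‖ ^ 2 := by positivity
  have hq : HasFDerivAt (fun y : EuclideanSpace ℝ (Fin N) => (‖y‖ ^ 2 : ℝ))
      (2 • innerSL ℝ x) x := (hasStrictFDerivAt_norm_sq x).hasFDerivAt
  have hr : HasDerivAt (fun t : ℝ => t ^ p) (p * (‖x‖ ^ 2 : ℝ) ^ (p - 1)) (‖x‖ ^ 2) :=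
    Real.hasDerivAt_rpow_const (Or.inl hq0.ne')
  have h3 : HasFDerivAt (fun y : EuclideanSpace ℝ (Fin N) => ((‖y‖ ^ 2 : ℝ)) ^ p)
      ((p * (‖x‖ ^ 2 : ℝ) ^ (p - 1)) • (2 • innerSL ℝ x)) x := (hr.comp_hasFDerivAt x hq :)
  have h4 : HasFDerivAt (fun y : EuclideanSpace ℝ (Fin N) => y i)
      (EuclideanSpace.proj (𝕜 := ℝ) i) x :=
    (EuclideanSpace.proj (𝕜 := ℝ) (ι := Fin N) i).hasFDerivAt
  have h5 := h3.mul h4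
  have hev : (fun y : EuclideanSpace ℝ (Fin N) => auxW N R p y * y i)
      =ᶠ[nhds x] (fun y => ((‖y‖ ^ 2 : ℝ)) ^ p * y i) := by
    have hU : IsOpen {y : EuclideanSpace ℝ (Fin N) | R < ‖y‖} :=
      isOpen_lt continuous_const continuous_norm
    filter_upwards [hU.mem_nhds hx] with y hy
    have h1 : (1:ℝ) ≤ (4 * ‖y‖ ^ 2 - R ^ 2) / (3 * R ^ 2) := by
      rw [le_div_iff₀ (by positivity)]
      have : R < ‖y‖ := hy
      nlinarith
    rw [auxW, Real.smoothTransition.one_of_one_le h1, one_mul]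
  exact h5.congr_of_eventuallyEq hev

set_option maxHeartbeats 1600000

abbrev EE (N : ℕ) : Type := EuclideanSpace ℝ (Fin N)

/-- Weighted Poincaré inequality for the weight pair
`(|x|^{β-2}, |x|^β)` on the exterior domain `{|x| > R}`, for `β ≠ 2 - N`,
on the core `C_c^∞`. -/
theorem stmt_18 (N : ℕ) (hN : 1 ≤ N) (R : ℝ) (hR : 0 < R) (β : ℝ)
    (hβ : β ≠ 2 - N) :
    ∃ CP : ℝ, 0 < CP ∧
      ∀ φ : EuclideanSpace ℝ (Fin N) → ℝ, ContDiff ℝ (⊤ : ℕ∞) φ →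
        HasCompactSupport φ →
        tsupport φ ⊆ {x : EuclideanSpace ℝ (Fin N) | R < ‖x‖} →
        (∫ x in {x : EuclideanSpace ℝ (Fin N) | R < ‖x‖},
            φ x ^ 2 * ‖x‖ ^ (β - 2)) ≤
          CP ^ 2 *
            ∫ x in {x : EuclideanSpace ℝ (Fin N) | R < ‖x‖},
              ‖gradient φ x‖ ^ 2 * ‖x‖ ^ β := by
  classical
  have hne : (N:ℝ) + β - 2 ≠ 0 := by
    intro h
    exact hβ (by linarith)
  set c : ℝ := |(N:ℝ) + β - 2| with hc_def
  have hc : 0 < c := abs_pos.mpr hne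
  refine ⟨2 / c, by positivity, ?_⟩
  intro φ hφω hφc hφs
  set Ω : Set (EE N) := {x : (EE N) | R < ‖x‖} with hΩ_def
  have hΩopen : IsOpen Ω := isOpen_lt continuous_const continuous_norm
  have hΩmeas : MeasurableSet Ω := hΩopen.measurableSet
  set p : ℝ := (β - 2) / 2 with hp_def
  set w : (EE N) → ℝ := auxW N R p with hw_def
  set w2 : (EE N) → ℝ := auxW N R (β / 2) with hw2_def
  have hw_eq : ∀ x : (EE N), x ∈ Ω → w x = ‖x‖ ^ (β - 2) := by
    intro x hx
    rw [hw_def, auxW_eq N R hR p x hx]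
    congr 1
    rw [hp_def]; ring
  have hw2_eq : ∀ x : (EE N), x ∈ Ω → w2 x = ‖x‖ ^ β := by
    intro x hx
    rw [hw2_def, auxW_eq N R hR _ x hx]
    congr 1
    ring
  have hw_cd : ContDiff ℝ ∞ w := auxW_smooth N R hR p
  have hw2_cd : ContDiff ℝ ∞ w2 := auxW_smooth N R hR (β / 2)
  have hphiS : ContDiff ℝ ∞ φ := hφω.of_le (by simp)
  have hφdiff : Differentiable ℝ φ := hphiS.differentiable (by norm_num)
  -- the function φ², its derivative, and the gradient of φ
  set f : (EE N) → ℝ := fun x => φ x ^ 2 with hf_def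
  have hf_cd : ContDiff ℝ ∞ f := hphiS.pow 2
  have hf_diff : Differentiable ℝ f := hf_cd.differentiable (by norm_num)
  have hf' : ∀ x : (EE N), fderiv ℝ f x = (2 * φ x) • fderiv ℝ φ x := by
    intro x
    have h := ((hφdiff x).hasFDerivAt).mul ((hφdiff x).hasFDerivAt)
    have h2 : HasFDerivAt f (φ x • fderiv ℝ φ x + φ x • fderiv ℝ φ x) x :=
      h.congr_of_eventuallyEq (Filter.Eventually.of_forall fun y => pow_two (φ y))
    rw [h2.fderiv]
    module
  set D : (EE N) → (EE N) := fun x => gradient φ x with hD_def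
  have hDval : ∀ (x v : (EE N)), fderiv ℝ φ x v = inner ℝ (D x) v := by
    intro x v
    show fderiv ℝ φ x v = inner ℝ (gradient φ x) v
    rw [gradient, InnerProductSpace.toDual_symm_apply]
  have hDcont : Continuous D := by
    have h1 : Continuous (fderiv ℝ φ) := hphiS.continuous_fderiv (by norm_num)
    show Continuous fun x : (EE N) =>
      (InnerProductSpace.toDual ℝ (EE N)).symm (fderiv ℝ φ x)
    exact (LinearIsometryEquiv.continuous _).comp h1
  have hφ0 : ∀ x : (EE N), x ∉ Ω → φ x = 0 := by
    intro x hx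
    exact image_eq_zero_of_notMem_tsupport (fun hmem => hx (hφs hmem))
  have hD0 : ∀ x : (EE N), x ∉ Ω → D x = 0 := by
    intro x hx
    have hx' : x ∉ tsupport φ := fun hmem => hx (hφs hmem)
    have hz : fderiv ℝ φ x = 0 := by
      by_contra h
      exact hx' (support_fderiv_subset ℝ (by simpa [Function.mem_support] using h))
    show gradient φ x = 0
    rw [gradient, hz, map_zero]
  -- the vector field components
  set g : Fin N → (EE N) → ℝ := fun i x => w x * x i with hg_def
  have hg_cd : ∀ i, ContDiff ℝ ∞ (g i) := by
    intro i
    exact hw_cd.mul (EuclideanSpace.proj (𝕜 := ℝ) (ι := Fin N) i).contDiff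
  have hg_diff : ∀ i, Differentiable ℝ (g i) := fun i => (hg_cd i).differentiable (by norm_num)
  set e : Fin N → (EE N) := fun i => EuclideanSpace.single i (1:ℝ) with he_def
  -- the derivative of g i on Ω
  have hgfd : ∀ (i : Fin N) (x : (EE N)), x ∈ Ω → fderiv ℝ (g i) x =
      ((‖x‖ ^ 2 : ℝ) ^ p) • EuclideanSpace.proj i
        + (x i) • ((p * (‖x‖ ^ 2 : ℝ) ^ (p - 1)) • (2 • innerSL ℝ x)) := by
    intro i x hx
    exact (auxW_hasFDerivAt N R hR p i x hx).fderiv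
  -- integrability helper
  have hφ0' : ∀ x : (EE N), x ∉ tsupport φ → φ x = 0 :=
    fun x hx => image_eq_zero_of_notMem_tsupport hx
  have hfd0' : ∀ x : (EE N), x ∉ tsupport φ → fderiv ℝ φ x = 0 := by
    intro x hx
    by_contra h
    exact hx (support_fderiv_subset ℝ (by simpa [Function.mem_support] using h))
  have hD0' : ∀ x : (EE N), x ∉ tsupport φ → D x = 0 := by
    intro x hx
    show gradient φ x = 0
    rw [gradient, hfd0' x hx, map_zero]
  have hint : ∀ u : (EE N) → ℝ, Continuous u → (∀ x : (EE N), x ∉ tsupport φ → u x = 0) →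
      Integrable u (volume : Measure (EE N)) := by
    intro u hu h0
    exact hu.integrable_of_hasCompactSupport (HasCompactSupport.intro hφc h0)
  -- continuity of various maps
  have hφcont : Continuous φ := hphiS.continuous
  have hcont_fdg : ∀ i : Fin N, Continuous fun x : (EE N) => fderiv ℝ (g i) x (e i) :=
    fun i => ((hg_cd i).continuous_fderiv_apply (by norm_num)).comp
      (continuous_id.prodMk continuous_const)
  have hcont_fdf : ∀ i : Fin N, Continuous fun x : (EE N) => fderiv ℝ f x (e i) :=
    fun i => (hf_cd.continuous_fderiv_apply (by norm_num)).comp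
      (continuous_id.prodMk continuous_const)
  -- the integrable functions
  have I1 : ∀ i : Fin N, Integrable (fun x : (EE N) => fderiv ℝ f x (e i) * g i x) volume := by
    intro i
    refine hint _ ((hcont_fdf i).mul ((hw_cd.continuous).mul ?_)) ?_
    · exact (EuclideanSpace.proj (𝕜 := ℝ) (ι := Fin N) i).continuous
    · intro x hx
      rw [hf' x]
      simp [hφ0' x hx]
  have I2 : ∀ i : Fin N, Integrable (fun x : (EE N) => f x * fderiv ℝ (g i) x (e i)) volume := by
    intro i
    refine hint _ (((hφcont.pow 2).mul (hcont_fdg i))) ?_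
    intro x hx
    simp [hf_def, hφ0' x hx]
  have I3 : ∀ i : Fin N, Integrable (fun x : (EE N) => f x * g i x) volume := by
    intro i
    refine hint _ ((hφcont.pow 2).mul ((hw_cd.continuous).mul
      (EuclideanSpace.proj (𝕜 := ℝ) (ι := Fin N) i).continuous)) ?_
    intro x hx
    simp [hf_def, hφ0' x hx]
  have IA : Integrable (fun x : (EE N) => f x * w x) volume := by
    refine hint _ ((hφcont.pow 2).mul hw_cd.continuous) ?_
    intro x hx
    simp [hf_def, hφ0' x hx]
  have IB : Integrable (fun x : (EE N) => ‖D x‖ ^ 2 * w2 x) volume := by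
    refine hint _ (((hDcont.norm).pow 2).mul hw2_cd.continuous) ?_
    intro x hx
    simp [hD0' x hx]
  -- integration by parts for each coordinate
  have hIBP : ∀ i : Fin N, ∫ x : (EE N), f x * fderiv ℝ (g i) x (e i) =
      - ∫ x : (EE N), fderiv ℝ f x (e i) * g i x := fun i =>
    integral_mul_fderiv_eq_neg_fderiv_mul_of_integrable (I1 i) (I2 i) (I3 i) (fun x _ => hf_diff x) (fun x _ => hg_diff i x)
  have hsum : ∫ x : (EE N), ∑ i, f x * fderiv ℝ (g i) x (e i) =
      - ∫ x : (EE N), ∑ i, fderiv ℝ f x (e i) * g i x := by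
    rw [integral_finset_sum _ (fun i _ => I2 i), integral_finset_sum _ (fun i _ => I1 i)]
    rw [Finset.sum_congr rfl (fun i _ => hIBP i), ← Finset.sum_neg_distrib]
  -- pointwise evaluation of the divergence sum
  have hqp : ∀ x : (EE N), x ∈ Ω → ((‖x‖ : ℝ) ^ 2) ^ p = ‖x‖ ^ (β - 2) := by
    intro x hx
    rw [← Real.rpow_natCast ‖x‖ 2, ← Real.rpow_mul (norm_nonneg x)]
    congr 1
    rw [hp_def]
    push_cast
    ring
  have hLHS : ∀ x : (EE N), (∑ i, f x * fderiv ℝ (g i) x (e i)) =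
      ((N:ℝ) + β - 2) * (f x * w x) := by
    intro x
    by_cases hx : x ∈ Ω
    · have hx0 : (0:ℝ) < ‖x‖ := lt_trans hR hx
      have hq0 : (0:ℝ) < ‖x‖ ^ 2 := by positivity
      have hterm : ∀ i : Fin N, fderiv ℝ (g i) x (e i)
          = (‖x‖ ^ 2 : ℝ) ^ p + (p * (‖x‖ ^ 2 : ℝ) ^ (p - 1)) * (2 * (x i * x i)) := by
        intro i
        rw [hgfd i x hx]
        simp only [ContinuousLinearMap.add_apply, ContinuousLinearMap.coe_smul',
          Pi.smul_apply, PiLp.proj_apply, ContinuousLinearMap.smul_apply,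
          innerSL_apply_apply, smul_eq_mul, he_def]
        rw [EuclideanSpace.single_apply]
        simp [real_inner_smul_right, EuclideanSpace.inner_single_right]
        ring
      have hsum2 : ∑ i : Fin N, (x i * x i) = ‖x‖ ^ 2 := by
        rw [← real_inner_self_eq_norm_sq]
        simp only [PiLp.inner_apply, RCLike.inner_apply, conj_trivial]
      have hpow : (‖x‖ ^ 2 : ℝ) ^ (p - 1) * (‖x‖ ^ 2) = (‖x‖ ^ 2 : ℝ) ^ p := by
        rw [Real.rpow_sub hq0, Real.rpow_one]
        field_simp
      have hwx : w x = (‖x‖ ^ 2 : ℝ) ^ p := by rw [hw_eq x hx, ← hqp x hx]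
      rw [← Finset.mul_sum]
      rw [Finset.sum_congr rfl (fun i _ => hterm i)]
      rw [Finset.sum_add_distrib, Finset.sum_const, ← Finset.mul_sum, ← Finset.mul_sum,
        hsum2]
      rw [Finset.card_univ, Fintype.card_fin]
      rw [hwx, nsmul_eq_mul]
      have h2p : 2 * p = β - 2 := by rw [hp_def]; ring
      linear_combination (2 * p * f x) * hpow + (f x * (‖x‖ ^ 2 : ℝ) ^ p) * h2p
    · have hφx : φ x = 0 := hφ0 x hx
      simp [hf_def, hφx]
  have hRHS : ∀ x : (EE N), (∑ i, fderiv ℝ f x (e i) * g i x) =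
      2 * φ x * w x * (inner ℝ (D x) x : ℝ) := by
    intro x
    have hterm : ∀ i : Fin N, fderiv ℝ f x (e i) * g i x
        = 2 * φ x * w x * (D x i * x i) := by
      intro i
      rw [hf' x]
      simp only [ContinuousLinearMap.coe_smul', Pi.smul_apply, smul_eq_mul, hg_def]
      rw [hDval x (e i)]
      have : (inner ℝ (D x) (e i) : ℝ) = D x i := by
        rw [he_def]
        simp [EuclideanSpace.inner_single_right]
      rw [this]
      ring
    rw [Finset.sum_congr rfl (fun i _ => hterm i), ← Finset.mul_sum]
    have hinner : (inner ℝ (D x) x : ℝ) = ∑ i, D x i * x i := by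
      rw [PiLp.inner_apply]
      simp [RCLike.inner_apply, mul_comm]
    rw [hinner]
  -- the main identity
  have hmain : ((N:ℝ) + β - 2) * ∫ x : (EE N), f x * w x
      = - ∫ x : (EE N), 2 * φ x * w x * (inner ℝ (D x) x : ℝ) := by
    have h1 : ∫ x : (EE N), ∑ i, f x * fderiv ℝ (g i) x (e i)
        = ((N:ℝ) + β - 2) * ∫ x : (EE N), f x * w x := by
      simp_rw [hLHS]
      rw [integral_const_mul]
    have h2 : ∫ x : (EE N), ∑ i, fderiv ℝ f x (e i) * g i x
        = ∫ x : (EE N), 2 * φ x * w x * (inner ℝ (D x) x : ℝ) := by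
      simp_rw [hRHS]
    rw [← h1, hsum, h2]
  -- conversions between set integrals and global integrals
  set A : ℝ := ∫ x in Ω, φ x ^ 2 * ‖x‖ ^ (β - 2) with hA_def
  set B : ℝ := ∫ x in Ω, ‖gradient φ x‖ ^ 2 * ‖x‖ ^ β with hB_def
  have hAeq : A = ∫ x : (EE N), f x * w x := by
    rw [hA_def, ← setIntegral_eq_integral_of_forall_compl_eq_zero
      (s := Ω) (f := fun x : (EE N) => f x * w x)
      (fun x hx => by simp [hf_def, hφ0 x hx])]
    exact setIntegral_congr_fun hΩmeas (fun x hx => by rw [hw_eq x hx])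
  have hBeq : B = ∫ x in Ω, ‖D x‖ ^ 2 * w2 x :=
    setIntegral_congr_fun hΩmeas (fun x hx => by rw [hw2_eq x hx])
  have hMeq : ∫ x : (EE N), 2 * φ x * w x * (inner ℝ (D x) x : ℝ)
      = ∫ x in Ω, 2 * φ x * w x * (inner ℝ (D x) x : ℝ) :=
    (setIntegral_eq_integral_of_forall_compl_eq_zero
      (fun x hx => by simp [hφ0 x hx])).symm
  -- nonnegativity
  have hA0 : 0 ≤ A := setIntegral_nonneg hΩmeas (fun x hx => by positivity)
  have hB0 : 0 ≤ B := setIntegral_nonneg hΩmeas (fun x hx => by positivity)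
  -- the pointwise bound
  set V : (EE N) → ℝ := fun x => c / 2 * (f x * w x) + 2 / c * (‖D x‖ ^ 2 * w2 x) with hV_def
  have hVint : Integrable V volume := (IA.const_mul _).add (IB.const_mul _)
  have hbound : |∫ x in Ω, 2 * φ x * w x * (inner ℝ (D x) x : ℝ)| ≤ ∫ x in Ω, V x := by
    rw [← Real.norm_eq_abs]
    apply norm_integral_le_of_norm_le hVint.integrableOn
    apply ae_restrict_of_forall_mem hΩmeas
    intro x hx
    rw [Real.norm_eq_abs]
    have hx0 : (0:ℝ) < ‖x‖ := lt_trans hR hx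
    have hwx := hw_eq x hx
    have hw2x := hw2_eq x hx
    have hCS : |(inner ℝ (D x) x : ℝ)| ≤ ‖D x‖ * ‖x‖ := abs_real_inner_le_norm _ _
    have hs : (0:ℝ) < ‖x‖ ^ (β - 2) := Real.rpow_pos_of_pos hx0 _
    have hrt : ‖x‖ ^ β = ‖x‖ ^ (β - 2) * ‖x‖ ^ 2 := by
      rw [← Real.rpow_natCast ‖x‖ 2, ← Real.rpow_add hx0]
      norm_num
    have h1 : |2 * φ x * w x * (inner ℝ (D x) x : ℝ)|
        ≤ 2 * |φ x| * ‖x‖ ^ (β - 2) * (‖D x‖ * ‖x‖) := by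
      rw [hwx, abs_mul, abs_mul, abs_mul]
      have e1 : |(2:ℝ)| = 2 := by norm_num
      have e2 : |‖x‖ ^ (β - 2)| = ‖x‖ ^ (β - 2) := abs_of_pos hs
      rw [e1, e2]
      have := mul_le_mul_of_nonneg_left hCS
        (by positivity : (0:ℝ) ≤ 2 * |φ x| * ‖x‖ ^ (β - 2))
      calc 2 * |φ x| * ‖x‖ ^ (β - 2) * |(inner ℝ (D x) x : ℝ)|
          ≤ 2 * |φ x| * ‖x‖ ^ (β - 2) * (‖D x‖ * ‖x‖) := this
        _ = 2 * |φ x| * ‖x‖ ^ (β - 2) * (‖D x‖ * ‖x‖) := rfl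
    refine h1.trans ?_
    rw [hV_def]
    simp only
    rw [hwx, hw2x, hrt]
    have hφsq : f x = |φ x| ^ 2 := by rw [hf_def, sq_abs]
    rw [hφsq]
    set a := |φ x|
    set b := ‖D x‖
    set r := ‖x‖
    set s := r ^ (β - 2)
    have ha : 0 ≤ a := abs_nonneg _
    have hb : 0 ≤ b := norm_nonneg _
    have hr : 0 < r := hx0
    have hs' : 0 < s := hs
    have key : 2 * a * (b * r) ≤ c / 2 * a ^ 2 + 2 / c * (b ^ 2 * r ^ 2) := by
      rw [div_mul_eq_mul_div, div_mul_eq_mul_div, div_add_div _ _ (by positivity)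
        (by positivity), le_div_iff₀ (by positivity)]
      nlinarith [sq_nonneg (c * a - 2 * (b * r)), hc]
    calc 2 * a * s * (b * r) = s * (2 * a * (b * r)) := by ring
      _ ≤ s * (c / 2 * a ^ 2 + 2 / c * (b ^ 2 * r ^ 2)) :=
          mul_le_mul_of_nonneg_left key hs'.le
      _ = c / 2 * (a ^ 2 * s) + 2 / c * (b ^ 2 * (s * r ^ 2)) := by ring
  -- split the integral of V
  have hVsplit : ∫ x in Ω, V x = c / 2 * A + 2 / c * B := by
    rw [hV_def]
    rw [integral_add ((IA.const_mul _).integrableOn) ((IB.const_mul _).integrableOn)]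
    rw [integral_const_mul, integral_const_mul]
    have hAΩ : ∫ x in Ω, f x * w x = A := by
      rw [hAeq]
      exact setIntegral_eq_integral_of_forall_compl_eq_zero
        (fun x hx => by simp [hf_def, hφ0 x hx])
    rw [hAΩ, ← hBeq]
  -- finish
  have hkey : c * A ≤ c / 2 * A + 2 / c * B := by
    have h1 : c * A = |((N:ℝ) + β - 2) * A| := by
      rw [abs_mul, hc_def, abs_of_nonneg hA0]
    have h2 : ((N:ℝ) + β - 2) * A = - ∫ x in Ω, 2 * φ x * w x * (inner ℝ (D x) x : ℝ) := by
      rw [hAeq, hmain, hMeq]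
    rw [h1, h2, abs_neg]
    exact hbound.trans (le_of_eq hVsplit)
  have hgoal : A ≤ (2 / c) ^ 2 * B := by
    have h7 : c / 2 * A ≤ 2 / c * B := by linarith
    have h8 := mul_le_mul_of_nonneg_left h7 (by positivity : (0:ℝ) ≤ 2 / c)
    calc A = 2 / c * (c / 2 * A) := by field_simp
      _ ≤ 2 / c * (2 / c * B) := h8
      _ = (2 / c) ^ 2 * B := by ring
  exact hgoal
end
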